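/- arXiv:2105.10546 — 8 statements merged into one kernel-verified Lean document; each statement's English description precedes it below -/
import Mathlib

section
/- The core of a belief function on a finite algebra is non-empty, and Bel is its pointwise minimum: for every belief function Bel on a finite algebra A, the set core(Bel) = {P : P finitely additive probability on A with Bel ≤ P} is non-empty and for every A ∈ A, Bel(A) = min{P(A) : P ∈ core(Bel)}. -/
open scoped Classical

/-- Complete monotonicity of a set function on a family `𝒜` of subsets of `Ω`. -/
def CompletelyMonotone {Ω : Type*} (𝒜 : Set (Set Ω)) (Bel : Set Ω → ℝ) : Prop :=
  ∀ k : ℕ, 2 ≤ k → ∀ A : Fin k → Set Ω, (∀ i, A i ∈ 𝒜) →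
    ∑ I ∈ Finset.univ.powerset.filter (fun I : Finset (Fin k) => I.Nonempty),
      (-1 : ℝ) ^ (I.card + 1) * Bel (⋂ i ∈ I, A i) ≤ Bel (⋃ i, A i)

/-- `P` is a finitely additive probability on the family `𝒜`. -/
def IsFAProb {Ω : Type*} (𝒜 : Set (Set Ω)) (P : Set Ω → ℝ) : Prop :=
  (∀ A ∈ 𝒜, P A ∈ Set.Icc (0 : ℝ) 1) ∧ P ∅ = 0 ∧ P Set.univ = 1 ∧
    ∀ A ∈ 𝒜, ∀ B ∈ 𝒜, A ∩ B = ∅ → P (A ∪ B) = P A + P B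

/-!
Shapley's greedy construction. Complete monotonicity gives in particular supermodularity,
`Bel A + Bel B ≤ Bel (A ∪ B) + Bel (A ∩ B)`. List the atoms of the finite algebra as
`t₁, …, tₙ` and give `tᵢ` the mass `Bel (tᵢ ∪ Sᵢ) - Bel Sᵢ`, where `Sᵢ = tᵢ₊₁ ∪ ⋯ ∪ tₙ`.
By induction along the list, supermodularity shows that the resulting additive `P` dominates
`Bel` on the algebra; the masses telescope, so `P Ω = Bel Ω = 1`, and if the atoms inside `A`
are listed last then also `P A = Bel A`.
-/

open Set MeasureTheory

section

variable {Ω : Type*}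

def SupermodularOn (𝒜 : Set (Set Ω)) (f : Set Ω → ℝ) : Prop :=
  ∀ A ∈ 𝒜, ∀ B ∈ 𝒜, f A + f B ≤ f (A ∪ B) + f (A ∩ B)

theorem CompletelyMonotone.supermodularOn {𝒜 : Set (Set Ω)} {f : Set Ω → ℝ}
    (hf : CompletelyMonotone 𝒜 f) : SupermodularOn 𝒜 f := by
  intro A hA B hB
  have h := hf 2 le_rfl ![A, B] (Fin.forall_fin_two.2 ⟨hA, hB⟩)
  have hsubsets : (Finset.univ : Finset (Fin 2)).powerset.filter (·.Nonempty) =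
      {{0}, {1}, Finset.univ} := by decide
  rw [hsubsets, Finset.sum_insert (by decide), Finset.sum_insert (by decide),
    Finset.sum_singleton] at h
  have hunion : ⋃ i, ![A, B] i = A ∪ B := by ext; simp [Fin.exists_fin_two]
  have hinter : ⋂ i, ![A, B] i = A ∩ B := by ext; simp [Fin.forall_fin_two]
  norm_num [hunion, hinter] at h
  linarith

def IsSetAtom (𝒜 : Set (Set Ω)) (t : Set Ω) : Prop :=
  t ∈ 𝒜 ∧ t.Nonempty ∧ ∀ B ∈ 𝒜, t ⊆ B ∨ Disjoint t B

section Atoms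

variable {𝒜 : Set (Set Ω)} {t u B : Set Ω}

theorem IsSetAtom.subset_of_mem {x : Ω} (ht : IsSetAtom 𝒜 t) (hB : B ∈ 𝒜) (hxt : x ∈ t)
    (hxB : x ∈ B) : t ⊆ B :=
  (ht.2.2 B hB).resolve_right (not_disjoint_iff.2 ⟨x, hxt, hxB⟩)

theorem IsSetAtom.disjoint_of_ne (ht : IsSetAtom 𝒜 t) (hu : IsSetAtom 𝒜 u) (hne : t ≠ u) :
    Disjoint t u := by
  refine (ht.2.2 u hu.1).resolve_left fun htu => ?_
  obtain ⟨x, hx⟩ := ht.2.1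
  exact hne (htu.antisymm (hu.subset_of_mem ht.1 (htu hx) hx))

theorem MeasureTheory.IsSetAlgebra.exists_isSetAtom_mem {𝒜 : Finset (Set Ω)}
    (h𝒜 : IsSetAlgebra (𝒜 : Set (Set Ω))) (x : Ω) : ∃ t, IsSetAtom 𝒜 t ∧ x ∈ t := by
  set t := ⋂ B ∈ 𝒜.filter (x ∈ ·), B
  have hxt : x ∈ t := by simp [t]
  have ht_subset : ∀ B ∈ 𝒜, x ∈ B → t ⊆ B := fun B hB hxB =>
    biInter_subset_of_mem (Finset.mem_filter.2 ⟨hB, hxB⟩)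
  refine ⟨t, ⟨h𝒜.biInter_mem _ fun B hB => (Finset.mem_filter.1 hB).1, ⟨x, hxt⟩,
    fun B hB => ?_⟩, hxt⟩
  by_cases hxB : x ∈ B
  · exact .inl (ht_subset B hB hxB)
  · exact .inr (subset_compl_iff_disjoint_right.1 (ht_subset Bᶜ (h𝒜.compl_mem hB) hxB))

end Atoms

noncomputable def greedyCharge (f : Set Ω → ℝ) : List (Set Ω) → Set Ω → ℝ
  | [], _ => 0
  | t :: l, C =>
    (if t ⊆ C then f (t ∪ ⋃ u ∈ l, u) - f (⋃ u ∈ l, u) else 0) + greedyCharge f l C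

section Greedy

variable {f : Set Ω → ℝ} {𝒜 : Set (Set Ω)} {l : List (Set Ω)} {C : Set Ω}

theorem greedyCharge_union {D : Set Ω} (hl : ∀ t ∈ l, IsSetAtom 𝒜 t) (hC : C ∈ 𝒜)
    (hCD : Disjoint C D) : greedyCharge f l (C ∪ D) = greedyCharge f l C + greedyCharge f l D := by
  induction l with
  | nil => simp [greedyCharge]
  | cons t l ih =>
    obtain ⟨ht, hl⟩ := List.forall_mem_cons.1 hl
    have hsplit : t ⊆ C ∪ D ↔ t ⊆ C ∨ t ⊆ D :=
      ⟨fun h => (ht.2.2 C hC).imp_right fun htC => htC.subset_right_of_subset_union h,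
        fun h => h.elim (fun h => h.trans subset_union_left) (fun h => h.trans subset_union_right)⟩
    have hnot_both : ¬ (t ⊆ C ∧ t ⊆ D) := fun h =>
      ht.2.1.ne_empty (disjoint_self.1 (hCD.mono h.1 h.2))
    simp only [greedyCharge, ih hl, hsplit]
    split_ifs <;> grind

theorem greedyCharge_empty (hl : ∀ t ∈ l, t.Nonempty) : greedyCharge f l ∅ = 0 := by
  induction l with
  | nil => rfl
  | cons t l ih =>
    obtain ⟨ht, hl⟩ := List.forall_mem_cons.1 hl
    simp [greedyCharge, ih hl, ht.ne_empty]

theorem greedyCharge_of_forall_subset (hl : ∀ t ∈ l, t ⊆ C) :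
    greedyCharge f l C = f (⋃ t ∈ l, t) - f ∅ := by
  induction l with
  | nil => simp [greedyCharge]
  | cons t l ih =>
    obtain ⟨ht, hl⟩ := List.forall_mem_cons.1 hl
    simp only [greedyCharge, if_pos ht, ih hl, List.mem_cons, iUnion_or, iUnion_union_distrib,
      iUnion_iUnion_eq_left]
    ring

theorem greedyCharge_append_of_forall_not_subset {l₁ : List (Set Ω)} (hl₁ : ∀ t ∈ l₁, ¬ t ⊆ C) :
    greedyCharge f (l₁ ++ l) C = greedyCharge f l C := by
  induction l₁ with
  | nil => rfl
  | cons t l₁ ih =>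
    obtain ⟨ht, hl₁⟩ := List.forall_mem_cons.1 hl₁
    simp [greedyCharge, ht, ih hl₁]

theorem MeasureTheory.IsSetAlgebra.biUnion_list_mem (h𝒜 : IsSetAlgebra 𝒜)
    (hl : ∀ t ∈ l, t ∈ 𝒜) : ⋃ t ∈ l, t ∈ 𝒜 := by
  induction l with
  | nil => simpa using h𝒜.empty_mem
  | cons t l ih =>
    obtain ⟨ht, hl⟩ := List.forall_mem_cons.1 hl
    simpa using h𝒜.union_mem ht (ih hl)

theorem le_greedyCharge (h𝒜 : IsSetAlgebra 𝒜) (hf : SupermodularOn 𝒜 f) (hf₀ : f ∅ = 0)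
    (hl : ∀ t ∈ l, IsSetAtom 𝒜 t) (hdisj : l.Pairwise Disjoint) (hC : C ∈ 𝒜) :
    f (C ∩ ⋃ t ∈ l, t) ≤ greedyCharge f l C := by
  induction l with
  | nil => simp [greedyCharge, hf₀]
  | cons t l ih =>
    obtain ⟨ht, hl⟩ := List.forall_mem_cons.1 hl
    obtain ⟨htl, hdisj⟩ := List.pairwise_cons.1 hdisj
    set S := ⋃ u ∈ l, u
    have hS : S ∈ 𝒜 := h𝒜.biUnion_list_mem fun u hu => (hl u hu).1
    have htS : Disjoint t S := by simpa [S] using htl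
    have ih := ih hl hdisj
    simp only [greedyCharge, List.mem_cons, iUnion_or, iUnion_union_distrib,
      iUnion_iUnion_eq_left]
    rcases ht.2.2 C hC with htC | htC
    · have key := hf (t ∪ C ∩ S) (h𝒜.union_mem ht.1 (h𝒜.inter_mem hC hS)) S hS
      have hunion : t ∪ C ∩ S ∪ S = t ∪ S := by
        rw [union_assoc, union_eq_right.2 inter_subset_right]
      have hinter : (t ∪ C ∩ S) ∩ S = C ∩ S := by
        rw [union_inter_distrib_right, htS.inter_eq, empty_union, inter_assoc, inter_self]
      rw [hunion, hinter] at key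
      rw [if_pos htC, inter_union_distrib_left, inter_eq_right.2 htC]
      linarith
    · rw [if_neg fun h => ?_, inter_union_distrib_left, htC.symm.inter_eq, empty_union, zero_add]
      · exact ih
      · exact ht.2.1.ne_empty (disjoint_self.1 (htC.mono_right h))

end Greedy

theorem isFAProb_of_le {𝒜 : Set (Set Ω)} (h𝒜 : IsSetAlgebra 𝒜) {f P : Set Ω → ℝ}
    (hf : ∀ A ∈ 𝒜, 0 ≤ f A) (hle : ∀ A ∈ 𝒜, f A ≤ P A) (hP₀ : P ∅ = 0) (hP₁ : P univ = 1)
    (hadd : ∀ A ∈ 𝒜, ∀ B ∈ 𝒜, A ∩ B = ∅ → P (A ∪ B) = P A + P B) : IsFAProb 𝒜 P := by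
  refine ⟨fun A hA => ⟨(hf A hA).trans (hle A hA), ?_⟩, hP₀, hP₁, hadd⟩
  have hAc := h𝒜.compl_mem hA
  have hsum := hadd A hA Aᶜ hAc (inter_compl_self A)
  rw [union_compl_self, hP₁] at hsum
  linarith [hf Aᶜ hAc, hle Aᶜ hAc]

theorem SupermodularOn.exists_isFAProb_le_eq {𝒜 : Finset (Set Ω)} {f : Set Ω → ℝ}
    (h𝒜 : IsSetAlgebra (𝒜 : Set (Set Ω))) (hf : SupermodularOn 𝒜 f)
    (hf_nonneg : ∀ A ∈ 𝒜, 0 ≤ f A) (hf₀ : f ∅ = 0) (hf₁ : f univ = 1) {A₀ : Set Ω} (hA₀ : A₀ ∈ 𝒜) :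
    ∃ P : Set Ω → ℝ, IsFAProb 𝒜 P ∧ (∀ B ∈ 𝒜, f B ≤ P B) ∧ P A₀ = f A₀ := by
  set atoms := (𝒜.filter (IsSetAtom 𝒜)).toList
  have mem_atoms : ∀ {t}, t ∈ atoms ↔ IsSetAtom 𝒜 t := by
    simp only [atoms, Finset.mem_toList, Finset.mem_filter, and_iff_right_iff_imp]
    exact fun ht => ht.1
  -- `greedyCharge` assigns masses from the end of the list, so the atoms inside `A₀` go last.
  set inside := atoms.filter (· ⊆ A₀)
  set l := atoms.filter (fun t => !decide (t ⊆ A₀)) ++ inside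
  have hperm : l.Perm atoms := List.perm_append_comm.trans (List.filter_append_perm _ atoms)
  have hl : ∀ t ∈ l, IsSetAtom 𝒜 t := fun t ht => mem_atoms.1 (hperm.mem_iff.1 ht)
  have hdisj : l.Pairwise Disjoint :=
    (hperm.nodup_iff.2 (Finset.nodup_toList _)).pairwise_of_forall_ne
      fun t ht u hu => (hl t ht).disjoint_of_ne (hl u hu)
  have hcover : ∀ C ∈ 𝒜, ⋃ t ∈ atoms.filter (· ⊆ C), t = C := by
    intro C hC
    refine subset_antisymm (by simp) fun x hx => ?_
    obtain ⟨t, ht, hxt⟩ := h𝒜.exists_isSetAtom_mem x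
    simp only [mem_iUnion]
    exact ⟨t, List.mem_filter.2 ⟨mem_atoms.2 ht, by simpa using ht.subset_of_mem hC hxt hx⟩, hxt⟩
  have hl_univ : ⋃ t ∈ l, t = univ := by
    simpa [hperm.mem_iff] using hcover univ h𝒜.univ_mem
  have hle : ∀ B ∈ 𝒜, f B ≤ greedyCharge f l B := fun B hB => by
    simpa [hl_univ] using le_greedyCharge h𝒜 hf hf₀ hl hdisj hB
  refine ⟨greedyCharge f l, isFAProb_of_le h𝒜 hf_nonneg hle ?_ ?_ ?_, hle, ?_⟩
  · exact greedyCharge_empty fun t ht => (hl t ht).2.1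
  · rw [greedyCharge_of_forall_subset fun t _ => subset_univ t, hl_univ, hf₁, hf₀, sub_zero]
  · exact fun A hA B _ hAB => greedyCharge_union hl hA (disjoint_iff_inter_eq_empty.2 hAB)
  · have houtside : ∀ t ∈ atoms.filter (fun t => !decide (t ⊆ A₀)), ¬ t ⊆ A₀ := by simp
    have hinside : ∀ t ∈ inside, t ⊆ A₀ := by simp [inside]
    rw [greedyCharge_append_of_forall_not_subset houtside, greedyCharge_of_forall_subset hinside,
      hcover A₀ hA₀, hf₀, sub_zero]

end

theorem stmt_5_general {Ω : Type*} (𝒜 : Finset (Set Ω))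
    (hEmp : ∅ ∈ 𝒜)
    (hcompl : ∀ A ∈ 𝒜, Aᶜ ∈ 𝒜)
    (hunion : ∀ A ∈ 𝒜, ∀ B ∈ 𝒜, A ∪ B ∈ 𝒜)
    (Bel : Set Ω → ℝ)
    (h01 : ∀ A ∈ 𝒜, Bel A ∈ Set.Icc (0 : ℝ) 1)
    (hB0 : Bel ∅ = 0) (hB1 : Bel Set.univ = 1)
    (hcm : CompletelyMonotone (↑𝒜) Bel) :
    (∃ P : Set Ω → ℝ, IsFAProb (↑𝒜) P ∧ ∀ A ∈ 𝒜, Bel A ≤ P A) ∧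
      ∀ A ∈ 𝒜,
        (∀ P : Set Ω → ℝ, IsFAProb (↑𝒜) P → (∀ B ∈ 𝒜, Bel B ≤ P B) → Bel A ≤ P A) ∧
        ∃ P : Set Ω → ℝ, IsFAProb (↑𝒜) P ∧ (∀ B ∈ 𝒜, Bel B ≤ P B) ∧ P A = Bel A := by
  have h𝒜 : IsSetAlgebra (𝒜 : Set (Set Ω)) := ⟨hEmp, fun A hA => hcompl A hA,
    fun A B hA hB => hunion A hA B hB⟩
  have hcore {A : Set Ω} (hA : A ∈ 𝒜) :=
    hcm.supermodularOn.exists_isFAProb_le_eq h𝒜 (fun B hB => (h01 B hB).1) hB0 hB1 hA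
  refine ⟨?_, fun A hA => ⟨fun P _ hP => hP A hA, hcore hA⟩⟩
  obtain ⟨P, hP, hle, -⟩ := hcore hEmp
  exact ⟨P, hP, hle⟩

theorem stmt_5 {Ω : Type*} [Nonempty Ω] (𝒜 : Finset (Set Ω))
    (hEmp : ∅ ∈ 𝒜) (hUniv : Set.univ ∈ 𝒜)
    (hcompl : ∀ A ∈ 𝒜, Aᶜ ∈ 𝒜)
    (hinter : ∀ A ∈ 𝒜, ∀ B ∈ 𝒜, A ∩ B ∈ 𝒜)
    (hunion : ∀ A ∈ 𝒜, ∀ B ∈ 𝒜, A ∪ B ∈ 𝒜)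
    (Bel : Set Ω → ℝ)
    (h01 : ∀ A ∈ 𝒜, Bel A ∈ Set.Icc (0 : ℝ) 1)
    (hB0 : Bel ∅ = 0) (hB1 : Bel Set.univ = 1)
    (hcm : CompletelyMonotone (↑𝒜) Bel) :
    (∃ P : Set Ω → ℝ, IsFAProb (↑𝒜) P ∧ ∀ A ∈ 𝒜, Bel A ≤ P A) ∧
      ∀ A ∈ 𝒜,
        (∀ P : Set Ω → ℝ, IsFAProb (↑𝒜) P → (∀ B ∈ 𝒜, Bel B ≤ P B) → Bel A ≤ P A) ∧
        ∃ P : Set Ω → ℝ, IsFAProb (↑𝒜) P ∧ (∀ B ∈ 𝒜, Bel B ≤ P B) ∧ P A = Bel A :=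
  stmt_5_general 𝒜 hEmp hcompl hunion Bel h01 hB0 hB1 hcm
end

section
/- Integral (convex-combination) representation of belief functions on a finite algebra: for every belief function Bel on a finite algebra A with U = A∖{∅}, there exists a probability distribution μ on U such that for every A ∈ A, Bel(A) = Σ_{B∈U} (min_{ω∈B} 1_A(ω)) μ({B}); conversely, every such convex combination of unanimity games is a belief function. Moreover, this correspondence is a bijection between belief functions on A and probability distributions on U. -/
open scoped Classical

/-- `Bel` is a belief function on the family `𝒜`. -/
def IsBelief {Ω : Type*} (𝒜 : Set (Set Ω)) (Bel : Set Ω → ℝ) : Prop :=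
  (∀ A ∈ 𝒜, Bel A ∈ Set.Icc (0 : ℝ) 1) ∧ Bel ∅ = 0 ∧ Bel Set.univ = 1 ∧
    CompletelyMonotone 𝒜 Bel

/-- `μ` is a probability distribution on `U`. -/
def IsProbDistOn {Ω : Type*} (U : Finset (Set Ω)) (μ : Set Ω → ℝ) : Prop :=
  (∀ B ∈ U, 0 ≤ μ B) ∧ ∑ B ∈ U, μ B = 1

/-!
A finite algebra `𝒜` is the power set of its atoms `atomOf 𝒜 ω`, so a set function on `𝒜` lives on
the Boolean lattice of finite sets of atoms, where its Möbius transform `mass 𝒜 Bel` satisfies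
`Bel A = ∑_{B ⊆ A} mass 𝒜 Bel B`. If `T` is the set of atoms of `B`, the sets `B \ a` (`a ∈ T`)
intersect, over `I ⊆ T`, in the union of the atoms in `T \ I`; complete monotonicity for this
family is therefore exactly `mass 𝒜 Bel B ≥ 0`. The system `Bel A = ∑_{B ⊆ A} μ B` is triangular,
so its solution is unique (compare two solutions at a `⊆`-minimal point where they differ).
Conversely, a unanimity game is completely monotone by inclusion–exclusion for the indicator of
`⋃ i, 𝒫 (A i)`, and complete monotonicity survives nonnegative combinations.
-/

open Finset MeasureTheory

noncomputable section

namespace Finset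

variable {α R : Type*} [Ring R]

-- Indexed by the removed part `t`, the shape in which complete monotonicity produces these sums.
def moebius (f : Finset α → R) (s : Finset α) : R :=
  ∑ t ∈ s.powerset, (-1) ^ #t * f (s \ t)

theorem moebius_insert {a : α} {s : Finset α} (ha : a ∉ s) (f : Finset α → R) :
    moebius f (insert a s) = moebius (fun u => f (insert a u)) s - moebius f s := by
  have hat : ∀ t ∈ s.powerset, a ∉ t := fun t ht h => ha (mem_powerset.1 ht h)
  rw [moebius, sum_powerset_insert ha, sub_eq_add_neg, moebius, moebius, ← sum_neg_distrib]
  congr 1 <;> refine sum_congr rfl fun t ht => ?_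
  · rw [insert_sdiff_of_notMem _ (hat t ht)]
  · rw [card_insert_of_notMem (hat t ht), insert_sdiff_insert, sdiff_insert_of_notMem ha,
      pow_succ, mul_neg_one, neg_mul]

theorem sum_powerset_moebius (f : Finset α → R) (s : Finset α) :
    ∑ t ∈ s.powerset, moebius f t = f s := by
  induction s using Finset.induction_on generalizing f with
  | empty => simp [moebius]
  | insert a s ha ih =>
    have hins : ∀ t ∈ s.powerset,
        moebius f (insert a t) = moebius (fun u => f (insert a u)) t - moebius f t :=
      fun t ht => moebius_insert (fun h => ha (mem_powerset.1 ht h)) f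
    rw [sum_powerset_insert ha, sum_congr rfl hins, sum_sub_distrib, ih, ih]
    abel

theorem moebius_eq_sub_sum (f : Finset α → R) (s : Finset α) :
    moebius f s = f s - ∑ t ∈ s.powerset with t.Nonempty, (-1) ^ (#t + 1) * f (s \ t) := by
  have hne : s.powerset.filter (·.Nonempty) = s.powerset.erase ∅ := by
    ext t; simp [nonempty_iff_ne_empty, and_comm]
  rw [moebius, hne, ← add_sum_erase _ _ (empty_mem_powerset s), ← sub_neg_eq_add,
    ← sum_neg_distrib]
  simp [pow_succ]

theorem eqOn_of_sum_filter_le_eq {β M : Type*} [PartialOrder β] [AddCancelCommMonoid M]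
    {s : Finset β} {f g : β → M}
    (h : ∀ a ∈ s, ∑ b ∈ s with b ≤ a, f b = ∑ b ∈ s with b ≤ a, g b) : Set.EqOn f g s := by
  by_contra hfg
  obtain ⟨m, hm⟩ := exists_minimal (s := s.filter fun b => f b ≠ g b) (by
    simpa [Set.EqOn, filter_nonempty_iff] using hfg)
  obtain ⟨hms, hfgm⟩ := mem_filter.1 hm.prop
  have hbelow : ∀ b ∈ (s.filter (· ≤ m)).erase m, f b = g b := by
    intro b hb
    obtain ⟨hbm, hbs, hble⟩ := by simpa using hb
    by_contra hfgb
    exact hbm (le_antisymm hble (hm.2 (mem_filter.2 ⟨hbs, hfgb⟩) hble))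
  have hmem : m ∈ s.filter (· ≤ m) := mem_filter.2 ⟨hms, le_rfl⟩
  have hsum := h m hms
  rw [← add_sum_erase _ _ hmem, ← add_sum_erase _ _ hmem, sum_congr rfl hbelow] at hsum
  exact hfgm (add_right_cancel hsum)

end Finset

variable {Ω : Type*}

def unanimity (B : Set Ω) (E : Set Ω) : ℝ := if B ⊆ E then 1 else 0

def mixture (U : Finset (Set Ω)) (μ : Set Ω → ℝ) (E : Set Ω) : ℝ :=
  ∑ B ∈ U, unanimity B E * μ B

theorem mixture_univ (U : Finset (Set Ω)) (μ : Set Ω → ℝ) :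
    mixture U μ Set.univ = ∑ B ∈ U, μ B := by
  simp [mixture, unanimity]

theorem CompletelyMonotone.sum_mul {𝒜 : Set (Set Ω)} {ι : Type*} (t : Finset ι)
    {F : ι → Set Ω → ℝ} (hF : ∀ j ∈ t, CompletelyMonotone 𝒜 (F j))
    {w : ι → ℝ} (hw : ∀ j ∈ t, 0 ≤ w j) :
    CompletelyMonotone 𝒜 (fun E => ∑ j ∈ t, F j E * w j) := by
  intro k hk A hA
  calc ∑ I ∈ univ.powerset with I.Nonempty,
        (-1 : ℝ) ^ (#I + 1) * ∑ j ∈ t, F j (⋂ i ∈ I, A i) * w j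
      = ∑ j ∈ t, (∑ I ∈ univ.powerset with I.Nonempty,
          (-1 : ℝ) ^ (#I + 1) * F j (⋂ i ∈ I, A i)) * w j := by
        simp only [Finset.mul_sum, Finset.sum_mul, mul_assoc]
        exact sum_comm
    _ ≤ ∑ j ∈ t, F j (⋃ i, A i) * w j :=
        sum_le_sum fun j hj => mul_le_mul_of_nonneg_right (hF j hj k hk A hA) (hw j hj)

theorem completelyMonotone_unanimity (𝒜 : Set (Set Ω)) (B : Set Ω) :
    CompletelyMonotone 𝒜 (unanimity B) := by
  intro k _ A _
  have hIic : ∀ E, unanimity B E = (Set.Iic E).indicator 1 B := fun E => by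
    simp [unanimity, Set.indicator_apply]
  have hbiInter : ∀ t : Finset (Fin k),
      unanimity B (⋂ i ∈ t, A i) = (⋂ i ∈ t, Set.Iic (A i)).indicator 1 B := fun t => by
    simp [unanimity, Set.indicator_apply]
  calc ∑ I ∈ univ.powerset with I.Nonempty, (-1 : ℝ) ^ (#I + 1) * unanimity B (⋂ i ∈ I, A i)
      = (⋃ i ∈ univ, Set.Iic (A i)).indicator 1 B := by
        rw [indicator_biUnion_eq_sum_powerset]
        exact sum_congr rfl fun t _ => by simp [hbiInter, zsmul_eq_mul]
    _ ≤ unanimity B (⋃ i, A i) := by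
        rw [hIic]
        refine Set.indicator_le_indicator_of_subset ?_ (fun _ => zero_le_one) B
        exact Set.iUnion₂_subset fun i _ => Set.Iic_subset_Iic.2 (Set.subset_iUnion A i)

theorem isBelief_mixture {U : Finset (Set Ω)} (hU : ∅ ∉ U) {μ : Set Ω → ℝ}
    (hμ : IsProbDistOn U μ) (𝒜 : Set (Set Ω)) : IsBelief 𝒜 (mixture U μ) := by
  obtain ⟨hμ0, hμ1⟩ := hμ
  have hterm : ∀ E, ∀ B ∈ U, 0 ≤ unanimity B E * μ B ∧ unanimity B E * μ B ≤ μ B := by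
    intro E B hB
    unfold unanimity
    split_ifs <;> simp [hμ0 B hB]
  refine ⟨fun E _ => ⟨sum_nonneg fun B hB => (hterm E B hB).1, ?_⟩, ?_, ?_, ?_⟩
  · exact hμ1 ▸ sum_le_sum fun B hB => (hterm E B hB).2
  · refine sum_eq_zero fun B hB => ?_
    have hB0 : ¬ B ⊆ ∅ := fun h => hU (Set.subset_empty_iff.1 h ▸ hB)
    simp [unanimity, hB0]
  · rw [mixture_univ, hμ1]
  · exact CompletelyMonotone.sum_mul U (fun B _ => completelyMonotone_unanimity 𝒜 B) hμ0

theorem eqOn_of_mixture_eq {U : Finset (Set Ω)} {μ₁ μ₂ : Set Ω → ℝ}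
    (h : ∀ A ∈ U, mixture U μ₁ A = mixture U μ₂ A) : Set.EqOn μ₁ μ₂ U :=
  eqOn_of_sum_filter_le_eq fun A hA => by
    simpa only [mixture, unanimity, boole_mul, ← sum_filter] using h A hA

theorem CompletelyMonotone.sum_le {𝒜 : Set (Set Ω)} {Bel : Set Ω → ℝ}
    (h : CompletelyMonotone 𝒜 Bel) {ι : Type*} {s : Finset ι} (hs : 2 ≤ #s)
    {A : ι → Set Ω} (hA : ∀ i ∈ s, A i ∈ 𝒜) :
    ∑ I ∈ s.powerset with I.Nonempty, (-1 : ℝ) ^ (#I + 1) * Bel (⋂ i ∈ I, A i) ≤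
      Bel (⋃ i ∈ s, A i) := by
  set e : Fin #s → ι := fun i => s.equivFin.symm i
  have he : Function.Injective e := Subtype.val_injective.comp s.equivFin.symm.injective
  have hs_eq : univ.image e = s := by
    ext x
    refine ⟨fun hx => ?_, fun hx => mem_image.2 ⟨s.equivFin ⟨x, hx⟩, mem_univ _, by simp [e]⟩⟩
    obtain ⟨i, -, rfl⟩ := mem_image.1 hx
    exact (s.equivFin.symm i).2
  have hCM := h #s hs (A ∘ e) (fun i => hA _ (hs_eq ▸ mem_image_of_mem e (mem_univ i)))
  rw [← hs_eq, powerset_image, filter_image, sum_image (image_injective he).injOn,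
    set_biUnion_finset_image]
  simpa [card_image_of_injective _ he, set_biInter_finset_image] using hCM

section Atoms

variable {𝒜 : Finset (Set Ω)}

def atomOf (𝒜 : Finset (Set Ω)) (ω : Ω) : Set Ω := ⋂ A ∈ 𝒜.filter (ω ∈ ·), A

def atoms (𝒜 : Finset (Set Ω)) : Finset (Set Ω) :=
  𝒜.filter (· ∈ Set.range (atomOf 𝒜))

theorem atoms_subset : atoms 𝒜 ⊆ 𝒜 := filter_subset _ _

def atomsBelow (𝒜 : Finset (Set Ω)) (B : Set Ω) : Finset (Set Ω) :=
  (atoms 𝒜).filter (· ⊆ B)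

theorem mem_atoms {C : Set Ω} : C ∈ atoms 𝒜 ↔ C ∈ 𝒜 ∧ ∃ ω, atomOf 𝒜 ω = C := mem_filter

theorem mem_atomsBelow {B C : Set Ω} : C ∈ atomsBelow 𝒜 B ↔ C ∈ atoms 𝒜 ∧ C ⊆ B := mem_filter

theorem atomsBelow_subset_atoms (B : Set Ω) : atomsBelow 𝒜 B ⊆ atoms 𝒜 := filter_subset _ _

theorem mem_atomOf (ω : Ω) : ω ∈ atomOf 𝒜 ω :=
  Set.mem_iInter₂.2 fun _ hA => (mem_filter.1 hA).2

theorem atomOf_subset {A : Set Ω} (hA : A ∈ 𝒜) {ω : Ω} (hω : ω ∈ A) : atomOf 𝒜 ω ⊆ A :=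
  Set.biInter_subset_of_mem (mem_filter.2 ⟨hA, hω⟩)

theorem atomOf_mem (h𝒜 : IsSetAlgebra (𝒜 : Set (Set Ω))) (ω : Ω) : atomOf 𝒜 ω ∈ 𝒜 :=
  h𝒜.biInter_mem _ fun _ hA => (mem_filter.1 hA).1

theorem atomOf_eq_of_mem (h𝒜 : IsSetAlgebra (𝒜 : Set (Set Ω))) {x ω : Ω}
    (hx : x ∈ atomOf 𝒜 ω) : atomOf 𝒜 x = atomOf 𝒜 ω := by
  have hω : ω ∈ atomOf 𝒜 x := Set.mem_iInter₂.2 fun A hA => by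
    obtain ⟨hA, hxA⟩ := mem_filter.1 hA
    by_contra hωA
    exact atomOf_subset (h𝒜.compl_mem hA) hωA hx hxA
  exact (atomOf_subset (atomOf_mem h𝒜 ω) hx).antisymm (atomOf_subset (atomOf_mem h𝒜 x) hω)

theorem atomOf_mem_atoms (h𝒜 : IsSetAlgebra (𝒜 : Set (Set Ω))) (ω : Ω) :
    atomOf 𝒜 ω ∈ atoms 𝒜 :=
  mem_atoms.2 ⟨atomOf_mem h𝒜 ω, ω, rfl⟩

theorem mem_iff_atomOf_eq (h𝒜 : IsSetAlgebra (𝒜 : Set (Set Ω))) {C : Set Ω} (hC : C ∈ atoms 𝒜)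
    {x : Ω} : x ∈ C ↔ atomOf 𝒜 x = C := by
  obtain ⟨ω, rfl⟩ := (mem_atoms.1 hC).2
  exact ⟨atomOf_eq_of_mem h𝒜, fun h => h ▸ mem_atomOf x⟩

theorem mem_biUnion_iff_atomOf_mem (h𝒜 : IsSetAlgebra (𝒜 : Set (Set Ω))) {S : Finset (Set Ω)}
    (hS : S ⊆ atoms 𝒜) {x : Ω} : x ∈ ⋃ C ∈ S, C ↔ atomOf 𝒜 x ∈ S := by
  simp only [Set.mem_iUnion, exists_prop]
  constructor
  · rintro ⟨C, hC, hx⟩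
    rwa [(mem_iff_atomOf_eq h𝒜 (hS hC)).1 hx]
  · exact fun hx => ⟨_, hx, mem_atomOf x⟩

theorem mem_iff_atomOf_mem_atomsBelow (h𝒜 : IsSetAlgebra (𝒜 : Set (Set Ω))) {B : Set Ω}
    (hB : B ∈ 𝒜) {x : Ω} : x ∈ B ↔ atomOf 𝒜 x ∈ atomsBelow 𝒜 B :=
  ⟨fun hx => mem_atomsBelow.2 ⟨atomOf_mem_atoms h𝒜 x, atomOf_subset hB hx⟩,
    fun hx => (mem_atomsBelow.1 hx).2 (mem_atomOf x)⟩

theorem biUnion_atomsBelow (h𝒜 : IsSetAlgebra (𝒜 : Set (Set Ω))) {B : Set Ω} (hB : B ∈ 𝒜) :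
    ⋃ C ∈ atomsBelow 𝒜 B, C = B := by
  ext x
  exact (mem_biUnion_iff_atomOf_mem h𝒜 (atomsBelow_subset_atoms B)).trans
    (mem_iff_atomOf_mem_atomsBelow h𝒜 hB).symm

theorem atomsBelow_biUnion (h𝒜 : IsSetAlgebra (𝒜 : Set (Set Ω))) {S : Finset (Set Ω)}
    (hS : S ⊆ atoms 𝒜) : atomsBelow 𝒜 (⋃ C ∈ S, C) = S := by
  ext C
  refine ⟨fun hC => ?_,
    fun hC => mem_atomsBelow.2 ⟨hS hC, subset_set_biUnion_of_mem (f := fun C => C) hC⟩⟩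
  obtain ⟨hC, hCS⟩ := mem_atomsBelow.1 hC
  obtain ⟨ω, rfl⟩ := (mem_atoms.1 hC).2
  exact (mem_biUnion_iff_atomOf_mem h𝒜 hS).1 (hCS (mem_atomOf ω))

theorem sum_filter_subset_eq_sum_powerset_atomsBelow {M : Type*} [AddCommMonoid M]
    (h𝒜 : IsSetAlgebra (𝒜 : Set (Set Ω))) (A : Set Ω) (g : Finset (Set Ω) → M) :
    ∑ B ∈ 𝒜 with B ⊆ A, g (atomsBelow 𝒜 B) = ∑ S ∈ (atomsBelow 𝒜 A).powerset, g S := by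
  refine sum_nbij' (atomsBelow 𝒜) (fun S => ⋃ C ∈ S, C) ?_ ?_ ?_ ?_ fun _ _ => rfl
  · intro B hB
    refine mem_powerset.2 fun C hC => mem_atomsBelow.2 ⟨(mem_atomsBelow.1 hC).1, ?_⟩
    exact (mem_atomsBelow.1 hC).2.trans (mem_filter.1 hB).2
  · intro S hS
    have hSA : ∀ C ∈ S, C ∈ 𝒜 ∧ C ⊆ A := fun C hC =>
      have hC := mem_atomsBelow.1 (mem_powerset.1 hS hC)
      ⟨atoms_subset hC.1, hC.2⟩
    exact mem_filter.2 ⟨h𝒜.biUnion_mem S fun C hC => (hSA C hC).1,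
      Set.iUnion₂_subset fun C hC => (hSA C hC).2⟩
  · intro B hB
    exact biUnion_atomsBelow h𝒜 (mem_filter.1 hB).1
  · intro S hS
    exact atomsBelow_biUnion h𝒜 ((mem_powerset.1 hS).trans (atomsBelow_subset_atoms A))

theorem biInter_sdiff_eq_biUnion_sdiff (h𝒜 : IsSetAlgebra (𝒜 : Set (Set Ω))) {B : Set Ω}
    (hB : B ∈ 𝒜) {I : Finset (Set Ω)} (hI : I ⊆ atomsBelow 𝒜 B) (hIne : I.Nonempty) :
    ⋂ a ∈ I, B \ a = ⋃ C ∈ atomsBelow 𝒜 B \ I, C := by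
  ext x
  rw [mem_biUnion_iff_atomOf_mem h𝒜 (sdiff_subset.trans (atomsBelow_subset_atoms B)), mem_sdiff,
    ← mem_iff_atomOf_mem_atomsBelow h𝒜 hB]
  simp only [Set.mem_iInter₂, Set.mem_sdiff]
  constructor
  · intro hx
    obtain ⟨a, ha⟩ := hIne
    refine ⟨(hx a ha).1, fun hxI => (hx _ hxI).2 (mem_atomOf x)⟩
  · rintro ⟨hxB, hxI⟩ a ha
    refine ⟨hxB, fun hxa => hxI ?_⟩
    rwa [(mem_iff_atomOf_eq h𝒜 (atomsBelow_subset_atoms B (hI ha))).1 hxa]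

theorem biUnion_sdiff_atomsBelow (h𝒜 : IsSetAlgebra (𝒜 : Set (Set Ω))) {B : Set Ω}
    (hcard : 2 ≤ #(atomsBelow 𝒜 B)) : ⋃ a ∈ atomsBelow 𝒜 B, B \ a = B := by
  refine (Set.iUnion₂_subset fun _ _ => Set.sdiff_subset).antisymm fun x hx => ?_
  obtain ⟨a, ha, hne⟩ := exists_mem_ne hcard (atomOf 𝒜 x)
  refine Set.mem_biUnion ha ⟨hx, fun hxa => hne ?_⟩
  exact ((mem_iff_atomOf_eq h𝒜 (atomsBelow_subset_atoms B ha)).1 hxa).symm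

theorem atomsBelow_empty : atomsBelow 𝒜 ∅ = ∅ :=
  eq_empty_of_forall_notMem fun C hC => by
    obtain ⟨hC, hC0⟩ := mem_atomsBelow.1 hC
    obtain ⟨ω, rfl⟩ := (mem_atoms.1 hC).2
    exact hC0 (mem_atomOf ω)

end Atoms

section Mass

variable {𝒜 : Finset (Set Ω)} {Bel : Set Ω → ℝ}

def mass (𝒜 : Finset (Set Ω)) (Bel : Set Ω → ℝ) (B : Set Ω) : ℝ :=
  moebius (fun S => Bel (⋃ C ∈ S, C)) (atomsBelow 𝒜 B)

theorem sum_mass_filter_subset (h𝒜 : IsSetAlgebra (𝒜 : Set (Set Ω))) {A : Set Ω} (hA : A ∈ 𝒜) :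
    ∑ B ∈ 𝒜 with B ⊆ A, mass 𝒜 Bel B = Bel A := by
  unfold mass
  rw [sum_filter_subset_eq_sum_powerset_atomsBelow h𝒜 A, sum_powerset_moebius,
    biUnion_atomsBelow h𝒜 hA]

theorem mass_empty (hBel : Bel ∅ = 0) : mass 𝒜 Bel ∅ = 0 := by
  simp [mass, atomsBelow_empty, moebius, hBel]

theorem mixture_mass (h𝒜 : IsSetAlgebra (𝒜 : Set (Set Ω))) (hBel : Bel ∅ = 0) {A : Set Ω}
    (hA : A ∈ 𝒜) : mixture (𝒜.erase ∅) (mass 𝒜 Bel) A = Bel A := by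
  rw [mixture, sum_erase _ (by rw [mass_empty hBel, mul_zero])]
  simp only [unanimity, boole_mul, ← sum_filter]
  exact sum_mass_filter_subset h𝒜 hA

theorem mass_nonneg (h𝒜 : IsSetAlgebra (𝒜 : Set (Set Ω))) (hBel : IsBelief 𝒜 Bel) {B : Set Ω}
    (hB : B ∈ 𝒜) : 0 ≤ mass 𝒜 Bel B := by
  obtain ⟨hIcc, hBel0, -, hCM⟩ := hBel
  set T := atomsBelow 𝒜 B with hT
  have hBelT : Bel (⋃ C ∈ T, C) = Bel B := by rw [biUnion_atomsBelow h𝒜 hB]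
  rcases lt_or_ge #T 2 with hcard | hcard
  · obtain hcard | hcard : #T = 0 ∨ #T = 1 := by omega
    · simp [mass, ← hT, card_eq_zero.1 hcard, moebius, hBel0]
    · obtain ⟨a, ha⟩ := card_eq_one.1 hcard
      have : mass 𝒜 Bel B = Bel B := by
        rw [← hBelT, mass, ← hT, ha, moebius, ← insert_empty,
          sum_powerset_insert (notMem_empty a)]
        simp [hBel0]
      exact this ▸ (hIcc B hB).1
  rw [mass, ← hT, moebius_eq_sub_sum, sub_nonneg, hBelT]
  calc ∑ I ∈ T.powerset with I.Nonempty, (-1) ^ (#I + 1) * Bel (⋃ C ∈ T \ I, C)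
      = ∑ I ∈ T.powerset with I.Nonempty, (-1) ^ (#I + 1) * Bel (⋂ a ∈ I, B \ a) := by
        refine sum_congr rfl fun I hI => ?_
        obtain ⟨hIT, hIne⟩ := mem_filter.1 hI
        rw [biInter_sdiff_eq_biUnion_sdiff h𝒜 hB (mem_powerset.1 hIT) hIne]
    _ ≤ Bel (⋃ a ∈ T, B \ a) := hCM.sum_le hcard fun a ha =>
        h𝒜.sdiff_mem hB (atoms_subset (atomsBelow_subset_atoms B ha))
    _ = Bel B := by rw [biUnion_sdiff_atomsBelow h𝒜 hcard]

end Mass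

end

theorem stmt_6_general {Ω : Type*} (𝒜 : Finset (Set Ω))
    (hEmp : ∅ ∈ 𝒜)
    (hcompl : ∀ A ∈ 𝒜, Aᶜ ∈ 𝒜)
    (hunion : ∀ A ∈ 𝒜, ∀ B ∈ 𝒜, A ∪ B ∈ 𝒜) :
    -- direct implication, with uniqueness of the representing distribution
    (∀ Bel : Set Ω → ℝ, IsBelief (↑𝒜) Bel →
      ∃ μ : Set Ω → ℝ, IsProbDistOn (𝒜.erase ∅) μ ∧
        (∀ A ∈ 𝒜, Bel A =
          ∑ B ∈ 𝒜.erase ∅, (if B ⊆ A then (1 : ℝ) else 0) * μ B) ∧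
        ∀ μ' : Set Ω → ℝ, IsProbDistOn (𝒜.erase ∅) μ' →
          (∀ A ∈ 𝒜, Bel A =
            ∑ B ∈ 𝒜.erase ∅, (if B ⊆ A then (1 : ℝ) else 0) * μ' B) →
          ∀ B ∈ 𝒜.erase ∅, μ' B = μ B) ∧
    -- converse: every convex combination of unanimity games is a belief function
    (∀ μ : Set Ω → ℝ, IsProbDistOn (𝒜.erase ∅) μ →
      IsBelief (↑𝒜)
        (fun A => ∑ B ∈ 𝒜.erase ∅, (if B ⊆ A then (1 : ℝ) else 0) * μ B)) := by
  have h𝒜 : IsSetAlgebra (𝒜 : Set (Set Ω)) :=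
    ⟨hEmp, fun A hA => hcompl A hA, fun A B hA hB => hunion A hA B hB⟩
  refine ⟨fun Bel hBel => ?_, fun μ hμ => isBelief_mixture (notMem_erase ∅ 𝒜) hμ 𝒜⟩
  have hrepr : ∀ A ∈ 𝒜, Bel A = mixture (𝒜.erase ∅) (mass 𝒜 Bel) A :=
    fun A hA => (mixture_mass h𝒜 hBel.2.1 hA).symm
  have hsum : ∑ B ∈ 𝒜.erase ∅, mass 𝒜 Bel B = 1 := by
    rw [← mixture_univ, ← hrepr _ h𝒜.univ_mem, hBel.2.2.1]
  refine ⟨mass 𝒜 Bel, ⟨fun B hB => mass_nonneg h𝒜 hBel (mem_of_mem_erase hB), hsum⟩, hrepr,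
    fun μ' _ hμ' => eqOn_of_mixture_eq fun A hA => ?_⟩
  exact (hμ' A (mem_of_mem_erase hA)).symm.trans (hrepr A (mem_of_mem_erase hA))

theorem stmt_6 {Ω : Type*} [Nonempty Ω] (𝒜 : Finset (Set Ω))
    (hEmp : ∅ ∈ 𝒜) (hUniv : Set.univ ∈ 𝒜)
    (hcompl : ∀ A ∈ 𝒜, Aᶜ ∈ 𝒜)
    (hinter : ∀ A ∈ 𝒜, ∀ B ∈ 𝒜, A ∩ B ∈ 𝒜)
    (hunion : ∀ A ∈ 𝒜, ∀ B ∈ 𝒜, A ∪ B ∈ 𝒜) :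
    -- direct implication, with uniqueness of the representing distribution
    (∀ Bel : Set Ω → ℝ, IsBelief (↑𝒜) Bel →
      ∃ μ : Set Ω → ℝ, IsProbDistOn (𝒜.erase ∅) μ ∧
        (∀ A ∈ 𝒜, Bel A =
          ∑ B ∈ 𝒜.erase ∅, (if B ⊆ A then (1 : ℝ) else 0) * μ B) ∧
        ∀ μ' : Set Ω → ℝ, IsProbDistOn (𝒜.erase ∅) μ' →
          (∀ A ∈ 𝒜, Bel A =
            ∑ B ∈ 𝒜.erase ∅, (if B ⊆ A then (1 : ℝ) else 0) * μ' B) →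
          ∀ B ∈ 𝒜.erase ∅, μ' B = μ B) ∧
    -- converse: every convex combination of unanimity games is a belief function
    (∀ μ : Set Ω → ℝ, IsProbDistOn (𝒜.erase ∅) μ →
      IsBelief (↑𝒜)
        (fun A => ∑ B ∈ 𝒜.erase ∅, (if B ⊆ A then (1 : ℝ) else 0) * μ B)) :=
  stmt_6_general 𝒜 hEmp hcompl hunion
end

section
/- A belief assessment on a finite family of events is coherent-3 if and only if it is coherent-1: for a finite family E = {E₁,…,E_n} of subsets of Ω, with A_E the algebra generated by E and U_E = A_E∖{∅}, the linear system Σ_{B∈U_E} (min_{ω∈B} 1_{E_i}(ω)) x_B = Bel(E_i) (i=1,…,n), Σ_{B∈U_E} x_B = 1, x_B ≥ 0, is solvable if and only if there exists a belief function Bel' : A_E → [0,1] with Bel'(E_i) = Bel(E_i) for all i. -/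
open scoped Classical

/-- `𝒜` (a set of subsets of `Ω`) is an algebra of sets. -/
def IsSetAlgebra {Ω : Type*} (𝒜 : Set (Set Ω)) : Prop :=
  ∅ ∈ 𝒜 ∧ Set.univ ∈ 𝒜 ∧ (∀ A ∈ 𝒜, Aᶜ ∈ 𝒜) ∧
    (∀ A ∈ 𝒜, ∀ B ∈ 𝒜, A ∩ B ∈ 𝒜) ∧ (∀ A ∈ 𝒜, ∀ B ∈ 𝒜, A ∪ B ∈ 𝒜)

/-- The finite family `𝒜` is the algebra generated by `𝒢`. -/
def IsGenAlgebraOf {Ω : Type*} (𝒜 : Finset (Set Ω)) (𝒢 : Set (Set Ω)) : Prop :=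
  IsSetAlgebra (↑𝒜 : Set (Set Ω)) ∧ 𝒢 ⊆ ↑𝒜 ∧
    ∀ ℬ : Set (Set Ω), IsSetAlgebra ℬ → 𝒢 ⊆ ℬ → ↑𝒜 ⊆ ℬ

/-!
A mass function `x` on the nonempty members of `𝒜` induces `A ↦ ∑_{B ⊆ A} x B`, which is
completely monotone by inclusion–exclusion. Conversely, a finite algebra of sets is the powerset
algebra of its atoms, so a belief function `Bel` can be Möbius-inverted along this identification
into `m` with `Bel A = ∑_{B ⊆ A} m B`. The mass `m B` is nonnegative because, when `B` contains at
least two atoms, `Bel B - m B` is the inclusion–exclusion sum of `Bel` over the sets obtained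
from `B` by deleting one of its atoms, and these sets cover `B`.
-/

open Finset

section Moebius

variable {α : Type*} [DecidableEq α]

def powersetMoebius (g : Finset α → ℝ) (S : Finset α) : ℝ :=
  ∑ R ∈ S.powerset, (-1) ^ #(S \ R) * g R

lemma sum_Icc_neg_one_pow_card_sdiff {R T : Finset α} (h : R ⊆ T) :
    ∑ S ∈ Icc R T, (-1 : ℝ) ^ #(S \ R) = if R = T then 1 else 0 := by
  have hcancel : ∀ Q ∈ (T \ R).powerset, (R ∪ Q) \ R = Q := fun Q hQ =>
    union_sdiff_cancel_left (disjoint_of_subset_right (mem_powerset.1 hQ) disjoint_sdiff)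
  rw [Icc_eq_image_powerset h, sum_image fun Q hQ Q' hQ' hQQ' => by
    rw [← hcancel Q hQ, ← hcancel Q' hQ', hQQ']]
  rw [sum_congr rfl fun Q hQ => by rw [hcancel Q hQ]]
  have hz := congrArg (fun z : ℤ => (z : ℝ)) (sum_powerset_neg_one_pow_card (x := T \ R))
  push_cast at hz
  rw [hz]
  by_cases hRT : R = T
  · simp [hRT]
  · rw [if_neg hRT, if_neg (by rwa [sdiff_eq_empty_iff_subset, h.ge_iff_eq])]

lemma sum_powerset_powersetMoebius (g : Finset α → ℝ) (T : Finset α) :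
    ∑ S ∈ T.powerset, powersetMoebius g S = g T := by
  unfold powersetMoebius
  rw [sum_comm' (t' := T.powerset) (s' := fun R => Icc R T)]
  · rw [sum_eq_single_of_mem T (mem_powerset_self T)]
    · simp [← sum_mul]
    · intro R hR hRT
      rw [← sum_mul, sum_Icc_neg_one_pow_card_sdiff (mem_powerset.1 hR), if_neg hRT, zero_mul]
  · intro S R
    simp only [mem_powerset, mem_Icc]
    exact ⟨fun ⟨h1, h2⟩ => ⟨⟨h2, h1⟩, h2.trans h1⟩, fun ⟨⟨h2, h1⟩, _⟩ => ⟨h1, h2⟩⟩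

lemma sum_powerset_sdiff {M : Type*} [AddCommMonoid M] (f : Finset α → M) (T : Finset α) :
    ∑ J ∈ T.powerset, f (T \ J) = ∑ R ∈ T.powerset, f R := by
  refine sum_nbij' (T \ ·) (T \ ·) (fun _ _ => mem_powerset.2 sdiff_subset)
    (fun _ _ => mem_powerset.2 sdiff_subset) (fun J hJ => ?_) (fun R hR => ?_) (fun _ _ => rfl)
  · exact Finset.sdiff_sdiff_eq_self (mem_powerset.1 hJ)
  · exact Finset.sdiff_sdiff_eq_self (mem_powerset.1 hR)

lemma sum_powerset_eq_add_sum_nonempty {M : Type*} [AddCommMonoid M] (f : Finset α → M)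
    (T : Finset α) : ∑ J ∈ T.powerset, f J = f ∅ + ∑ J ∈ T.powerset with J.Nonempty, f J := by
  have : T.powerset.filter Finset.Nonempty = T.powerset.erase ∅ := by
    ext J; simp [nonempty_iff_ne_empty, and_comm]
  rw [this, add_sum_erase _ _ (empty_mem_powerset T)]

lemma powersetMoebius_eq_sub (g : Finset α → ℝ) (T : Finset α) :
    powersetMoebius g T =
      g T - ∑ J ∈ T.powerset with J.Nonempty, (-1) ^ (#J + 1) * g (T \ J) := by
  rw [powersetMoebius, ← sum_powerset_sdiff, sum_powerset_eq_add_sum_nonempty]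
  rw [sum_congr rfl fun J hJ => by
    rw [Finset.sdiff_sdiff_eq_self (mem_powerset.1 (mem_filter.1 hJ).1)]]
  simp [pow_succ, sub_eq_add_neg, ← sum_neg_distrib]

lemma powersetMoebius_of_card_le_one {g : Finset α → ℝ} (h0 : g ∅ = 0) {T : Finset α}
    (hT : #T ≤ 1) : powersetMoebius g T = g T := by
  obtain rfl | ⟨a, rfl⟩ : T = ∅ ∨ ∃ a, T = {a} := by
    rcases Nat.le_one_iff_eq_zero_or_eq_one.1 hT with h | h
    · exact .inl (card_eq_zero.1 h)
    · exact .inr (card_eq_one.1 h)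
  · simp [powersetMoebius]
  · rw [powersetMoebius, ← insert_empty_eq, sum_powerset_insert (notMem_empty a)]
    simp [h0]

end Moebius

lemma biUnion_biUnion_erase {α : Type*} [DecidableEq (Set α)] {T : Finset (Set α)}
    (hT : 2 ≤ #T) : ⋃ a ∈ T, ⋃ b ∈ T.erase a, b = ⋃ b ∈ T, b := by
  refine subset_antisymm (Set.iUnion₂_subset fun a _ => Set.biUnion_subset_biUnion_left
    fun b hb => mem_of_mem_erase hb) (Set.iUnion₂_subset fun b hb => ?_)
  obtain ⟨a, ha, hab⟩ := exists_mem_ne hT b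
  exact Set.subset_iUnion₂_of_subset a ha (Set.subset_iUnion₂_of_subset b
    (mem_erase.2 ⟨hab.symm, hb⟩) subset_rfl)

lemma CompletelyMonotone.sum_powerset_le {Ω ι : Type*} [DecidableEq ι] {𝒜 : Set (Set Ω)}
    {Bel : Set Ω → ℝ} (h : CompletelyMonotone 𝒜 Bel) {T : Finset ι} (hT : 2 ≤ #T)
    {A : ι → Set Ω} (hA : ∀ i ∈ T, A i ∈ 𝒜) :
    ∑ J ∈ T.powerset with J.Nonempty, (-1) ^ (#J + 1) * Bel (⋂ i ∈ J, A i) ≤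
      Bel (⋃ i ∈ T, A i) := by
  set e : Fin #T → ι := fun i => T.equivFin.symm i
  have he : e.Injective := Subtype.val_injective.comp T.equivFin.symm.injective
  have hTe : univ.image e = T := by
    ext i
    simpa [e] using ⟨fun ⟨a, ha⟩ => ha ▸ (T.equivFin.symm a).2,
      fun hi => ⟨T.equivFin ⟨i, hi⟩, by simp⟩⟩
  have := h T.card hT (A ∘ e) (fun i => hA _ (T.equivFin.symm i).2)
  rw [← hTe, powerset_image, filter_image, sum_image
    ((image_injOn_powerset_of_injOn he.injOn).mono (filter_subset _ _))]
  simpa [Function.comp_def, card_image_of_injective _ he, set_biInter_finset_image] using this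

lemma completelyMonotone_sum_mass {Ω : Type*} (𝒜 : Set (Set Ω)) (D : Finset (Set Ω))
    {x : Set Ω → ℝ} (hx : ∀ B ∈ D, 0 ≤ x B) :
    CompletelyMonotone 𝒜 fun A => ∑ B ∈ D, (if B ⊆ A then 1 else 0) * x B := by
  intro k _ A _
  have hincl : ∀ B, ∑ I ∈ univ.powerset with I.Nonempty,
      (-1) ^ (#I + 1) * ((if B ⊆ ⋂ i ∈ I, A i then 1 else 0) * x B) =
        (⋃ i, Set.Iic (A i)).indicator x B := by
    intro B
    have := indicator_biUnion_eq_sum_powerset univ (fun i => Set.Iic (A i)) x B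
    simp only [mem_univ, Set.iUnion_true] at this
    rw [this]
    refine sum_congr rfl fun I _ => ?_
    simp [Set.indicator_apply, zsmul_eq_mul, Set.subset_iInter_iff]
  simp only [mul_sum]
  rw [sum_comm, sum_congr rfl fun B _ => hincl B]
  refine sum_le_sum fun B hB => ?_
  by_cases hB' : B ∈ ⋃ i, Set.Iic (A i)
  · obtain ⟨i, hi⟩ := Set.mem_iUnion.1 hB'
    rw [Set.indicator_of_mem hB', if_pos (Set.subset_iUnion_of_subset i hi), one_mul]
  · rw [Set.indicator_of_notMem hB']
    exact mul_nonneg (by split_ifs <;> norm_num) (hx B hB)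

lemma isBelief_sum_mass {Ω : Type*} (𝒜 : Set (Set Ω)) {D : Finset (Set Ω)} (hD : ∅ ∉ D)
    {x : Set Ω → ℝ} (hx : ∀ B ∈ D, 0 ≤ x B) (hx1 : ∑ B ∈ D, x B = 1) :
    IsBelief 𝒜 fun A => ∑ B ∈ D, (if B ⊆ A then 1 else 0) * x B := by
  have hbool (B A : Set Ω) : (if B ⊆ A then (1 : ℝ) else 0) ∈ Set.Icc 0 1 := by
    split_ifs <;> simp
  refine ⟨fun A _ => ⟨sum_nonneg fun B hB => mul_nonneg (hbool B A).1 (hx B hB),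
      (sum_le_sum fun B hB => mul_le_of_le_one_left (hx B hB) (hbool B A).2).trans hx1.le⟩,
    sum_eq_zero fun B hB => ?_, by simpa using hx1, completelyMonotone_sum_mass 𝒜 D hx⟩
  rw [if_neg fun h => hD (Set.subset_empty_iff.1 h ▸ hB), zero_mul]

lemma IsSetAlgebra.toMeasureTheory {Ω : Type*} {𝒜 : Set (Set Ω)} (h : IsSetAlgebra 𝒜) :
    MeasureTheory.IsSetAlgebra 𝒜 :=
  ⟨h.1, fun _ hA => h.2.2.1 _ hA, fun A B hA hB => h.2.2.2.2 A hA B hB⟩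

namespace SetAlgebra

variable {Ω : Type*} (𝒜 : Finset (Set Ω))

noncomputable def atomOf (ω : Ω) : Set Ω := ⋂ A ∈ 𝒜.filter (ω ∈ ·), A

noncomputable def atoms : Finset (Set Ω) := 𝒜.filter fun a => ∃ ω, atomOf 𝒜 ω = a

noncomputable def atomsIn (A : Set Ω) : Finset (Set Ω) := (atoms 𝒜).filter (· ⊆ A)

noncomputable def mass (Bel : Set Ω → ℝ) (B : Set Ω) : ℝ :=
  powersetMoebius (fun S => Bel (⋃ a ∈ S, a)) (atomsIn 𝒜 B)

variable {𝒜}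

lemma mem_atomOf (ω : Ω) : ω ∈ atomOf 𝒜 ω := by
  simp [atomOf]

lemma atomOf_subset {A : Set Ω} (hA : A ∈ 𝒜) {ω : Ω} (hω : ω ∈ A) : atomOf 𝒜 ω ⊆ A :=
  Set.biInter_subset_of_mem (mem_filter.2 ⟨hA, hω⟩)

lemma atomsIn_empty : atomsIn 𝒜 ∅ = ∅ := by
  refine filter_false_of_mem fun a ha haE => ?_
  obtain ⟨ω, rfl⟩ := (mem_filter.1 ha).2
  exact haE (mem_atomOf ω)

lemma atomOf_mem (h𝒜 : IsSetAlgebra (𝒜 : Set (Set Ω))) (ω : Ω) : atomOf 𝒜 ω ∈ 𝒜 :=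
  h𝒜.toMeasureTheory.biInter_mem _ fun _ hA => (mem_filter.1 hA).1

lemma atomOf_eq_of_mem (h𝒜 : IsSetAlgebra (𝒜 : Set (Set Ω))) {ω ω' : Ω} (h : ω ∈ atomOf 𝒜 ω') :
    atomOf 𝒜 ω = atomOf 𝒜 ω' := by
  have : ∀ A ∈ 𝒜, ω ∈ A ↔ ω' ∈ A := fun A hA =>
    ⟨fun hωA => by_contra fun hω'A => atomOf_subset (h𝒜.2.2.1 A hA) hω'A h hωA,
      fun hω'A => atomOf_subset hA hω'A h⟩
  simp only [atomOf, filter_congr this]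

lemma atomOf_mem_atoms (h𝒜 : IsSetAlgebra (𝒜 : Set (Set Ω))) (ω : Ω) :
    atomOf 𝒜 ω ∈ atoms 𝒜 :=
  mem_filter.2 ⟨atomOf_mem h𝒜 ω, ω, rfl⟩

lemma mem_atom_iff (h𝒜 : IsSetAlgebra (𝒜 : Set (Set Ω))) {a : Set Ω} (ha : a ∈ atoms 𝒜) {ω : Ω} :
    ω ∈ a ↔ atomOf 𝒜 ω = a := by
  obtain ⟨ω', rfl⟩ := (mem_filter.1 ha).2
  exact ⟨atomOf_eq_of_mem h𝒜, fun h => h ▸ mem_atomOf ω⟩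

lemma mem_biUnion_atoms_iff (h𝒜 : IsSetAlgebra (𝒜 : Set (Set Ω))) {S : Finset (Set Ω)}
    (hS : S ⊆ atoms 𝒜) {ω : Ω} :
    ω ∈ ⋃ a ∈ S, a ↔ atomOf 𝒜 ω ∈ S := by
  simp only [Set.mem_iUnion, exists_prop]
  exact ⟨fun ⟨a, ha, hωa⟩ => (mem_atom_iff h𝒜 (hS ha)).1 hωa ▸ ha,
    fun h => ⟨_, h, mem_atomOf ω⟩⟩

lemma atomOf_mem_atomsIn_iff (h𝒜 : IsSetAlgebra (𝒜 : Set (Set Ω))) {A : Set Ω} (hA : A ∈ 𝒜)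
    {ω : Ω} :
    atomOf 𝒜 ω ∈ atomsIn 𝒜 A ↔ ω ∈ A :=
  ⟨fun h => (mem_filter.1 h).2 (mem_atomOf ω),
    fun h => mem_filter.2 ⟨atomOf_mem_atoms h𝒜 ω, atomOf_subset hA h⟩⟩

lemma biUnion_atomsIn (h𝒜 : IsSetAlgebra (𝒜 : Set (Set Ω))) {A : Set Ω} (hA : A ∈ 𝒜) :
    ⋃ a ∈ atomsIn 𝒜 A, a = A := by
  ext ω
  rw [mem_biUnion_atoms_iff h𝒜 (S := atomsIn 𝒜 A) (filter_subset _ _),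
    atomOf_mem_atomsIn_iff h𝒜 hA]

lemma atomsIn_biUnion (h𝒜 : IsSetAlgebra (𝒜 : Set (Set Ω))) {S : Finset (Set Ω)}
    (hS : S ⊆ atoms 𝒜) :
    atomsIn 𝒜 (⋃ a ∈ S, a) = S := by
  ext a
  refine ⟨fun ha => ?_,
    fun ha => mem_filter.2 ⟨hS ha, Set.subset_iUnion₂_of_subset a ha subset_rfl⟩⟩
  obtain ⟨ha, haS⟩ := mem_filter.1 ha
  obtain ⟨ω, rfl⟩ := (mem_filter.1 ha).2
  exact (mem_biUnion_atoms_iff h𝒜 hS).1 (haS (mem_atomOf ω))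

lemma biUnion_mem_of_subset_atoms (h𝒜 : IsSetAlgebra (𝒜 : Set (Set Ω))) {S : Finset (Set Ω)}
    (hS : S ⊆ atoms 𝒜) : ⋃ a ∈ S, a ∈ 𝒜 :=
  h𝒜.toMeasureTheory.biUnion_mem S fun _ ha => (mem_filter.1 (hS ha)).1

lemma sum_filter_subset_eq_sum_powerset_atomsIn {M : Type*} [AddCommMonoid M]
    (h𝒜 : IsSetAlgebra (𝒜 : Set (Set Ω))) (f : Set Ω → M) (A : Set Ω) :
    ∑ B ∈ 𝒜 with B ⊆ A, f B = ∑ S ∈ (atomsIn 𝒜 A).powerset, f (⋃ a ∈ S, a) := by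
  have hsub : ∀ S ∈ (atomsIn 𝒜 A).powerset, S ⊆ atoms 𝒜 :=
    fun S hS => (mem_powerset.1 hS).trans (filter_subset _ _)
  refine sum_nbij' (atomsIn 𝒜) (fun S => ⋃ a ∈ S, a) (fun B hB => ?_) (fun S hS => ?_)
    (fun B hB => biUnion_atomsIn h𝒜 (mem_filter.1 hB).1)
    (fun S hS => atomsIn_biUnion h𝒜 (hsub S hS)) (fun B hB => ?_)
  · exact mem_powerset.2 fun a ha => mem_filter.2 ⟨(mem_filter.1 ha).1,
      (mem_filter.1 ha).2.trans (mem_filter.1 hB).2⟩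
  · refine mem_filter.2 ⟨biUnion_mem_of_subset_atoms h𝒜 (hsub S hS),
      Set.iUnion₂_subset fun _ ha => (mem_filter.1 (mem_powerset.1 hS ha)).2⟩
  · rw [biUnion_atomsIn h𝒜 (mem_filter.1 hB).1]

lemma biInter_biUnion_erase (h𝒜 : IsSetAlgebra (𝒜 : Set (Set Ω))) {T J : Finset (Set Ω)}
    (hT : T ⊆ atoms 𝒜) (hJ : J.Nonempty) :
    ⋂ a ∈ J, ⋃ b ∈ T.erase a, b = ⋃ b ∈ T \ J, b := by
  ext ω
  have hmem (a : Set Ω) : ω ∈ ⋃ b ∈ T.erase a, b ↔ atomOf 𝒜 ω ∈ T.erase a :=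
    mem_biUnion_atoms_iff h𝒜 ((erase_subset _ _).trans hT)
  simp only [Set.mem_iInter, hmem, mem_biUnion_atoms_iff h𝒜 (sdiff_subset.trans hT)]
  simp only [mem_erase, mem_sdiff]
  obtain ⟨a, ha⟩ := hJ
  exact ⟨fun h => ⟨(h a ha).2, fun hJ => (h _ hJ).1 rfl⟩,
    fun h b hb => ⟨fun e => h.2 (e ▸ hb), h.1⟩⟩

lemma _root_.CompletelyMonotone.sum_biUnion_sdiff_le (h𝒜 : IsSetAlgebra (𝒜 : Set (Set Ω)))
    {Bel : Set Ω → ℝ} (hCM : CompletelyMonotone 𝒜 Bel) {T : Finset (Set Ω)}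
    (hT : T ⊆ atoms 𝒜) (hT2 : 2 ≤ #T) :
    ∑ J ∈ T.powerset with J.Nonempty, (-1) ^ (#J + 1) * Bel (⋃ b ∈ T \ J, b) ≤
      Bel (⋃ b ∈ T, b) := by
  have := hCM.sum_powerset_le hT2 (A := fun a => ⋃ b ∈ T.erase a, b)
    fun a _ => biUnion_mem_of_subset_atoms h𝒜 ((erase_subset _ _).trans hT)
  rwa [biUnion_biUnion_erase hT2, sum_congr rfl fun J hJ => by
    rw [biInter_biUnion_erase h𝒜 hT (mem_filter.1 hJ).2]] at this

lemma mass_nonneg (h𝒜 : IsSetAlgebra (𝒜 : Set (Set Ω))) {Bel : Set Ω → ℝ}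
    (hnonneg : ∀ A ∈ 𝒜, 0 ≤ Bel A) (h0 : Bel ∅ = 0) (hCM : CompletelyMonotone 𝒜 Bel)
    {B : Set Ω} (hB : B ∈ 𝒜) : 0 ≤ mass 𝒜 Bel B := by
  rcases le_or_gt #(atomsIn 𝒜 B) 1 with hT | hT
  · rw [mass, powersetMoebius_of_card_le_one (by simpa using h0) hT, biUnion_atomsIn h𝒜 hB]
    exact hnonneg B hB
  · rw [mass, powersetMoebius_eq_sub, sub_nonneg]
    exact hCM.sum_biUnion_sdiff_le h𝒜 (filter_subset _ _) hT

lemma sum_mass (h𝒜 : IsSetAlgebra (𝒜 : Set (Set Ω))) {Bel : Set Ω → ℝ} (h0 : Bel ∅ = 0)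
    {A : Set Ω} (hA : A ∈ 𝒜) :
    ∑ B ∈ 𝒜.erase ∅, (if B ⊆ A then 1 else 0) * mass 𝒜 Bel B = Bel A := by
  have hmass0 : mass 𝒜 Bel ∅ = 0 := by simp [mass, atomsIn_empty, powersetMoebius, h0]
  rw [sum_erase _ (by rw [hmass0, mul_zero])]
  simp only [boole_mul, ← sum_filter]
  rw [sum_filter_subset_eq_sum_powerset_atomsIn h𝒜, sum_congr rfl fun S hS => by
      rw [mass, atomsIn_biUnion h𝒜 ((mem_powerset.1 hS).trans (filter_subset _ _))],
    sum_powerset_powersetMoebius, biUnion_atomsIn h𝒜 hA]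

end SetAlgebra

theorem stmt_7_general {Ω : Type*} {n : ℕ}
    (E : Fin n → Set Ω) (Bel : Fin n → ℝ)
    (𝒜 : Finset (Set Ω)) (h𝒜 : IsGenAlgebraOf 𝒜 (Set.range E)) :
    (∃ x : Set Ω → ℝ,
        (∀ B ∈ 𝒜.erase ∅, 0 ≤ x B) ∧
        (∑ B ∈ 𝒜.erase ∅, x B) = 1 ∧
        ∀ i, (∑ B ∈ 𝒜.erase ∅, (if B ⊆ E i then (1 : ℝ) else 0) * x B) = Bel i) ↔
      (∃ Bel' : Set Ω → ℝ, IsBelief (↑𝒜) Bel' ∧ ∀ i, Bel' (E i) = Bel i) := by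
  obtain ⟨h𝒜, hE, -⟩ := h𝒜
  constructor
  · rintro ⟨x, hx, hx1, hxE⟩
    exact ⟨_, isBelief_sum_mass _ (notMem_erase ∅ 𝒜) hx hx1, hxE⟩
  · rintro ⟨Bel', ⟨hBel', h0, h1, hCM⟩, hBel'E⟩
    refine ⟨SetAlgebra.mass 𝒜 Bel', fun B hB => SetAlgebra.mass_nonneg h𝒜
      (fun A hA => (hBel' A hA).1) h0 hCM (mem_of_mem_erase hB), ?_, fun i => ?_⟩
    · simpa [h1] using SetAlgebra.sum_mass h𝒜 h0 h𝒜.2.1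
    · rw [SetAlgebra.sum_mass h𝒜 h0 (hE ⟨i, rfl⟩), hBel'E i]

theorem stmt_7 {Ω : Type*} [Nonempty Ω] {n : ℕ}
    (E : Fin n → Set Ω) (Bel : Fin n → ℝ) (hBel : ∀ i, Bel i ∈ Set.Icc (0 : ℝ) 1)
    (𝒜 : Finset (Set Ω)) (h𝒜 : IsGenAlgebraOf 𝒜 (Set.range E)) :
    (∃ x : Set Ω → ℝ,
        (∀ B ∈ 𝒜.erase ∅, 0 ≤ x B) ∧
        (∑ B ∈ 𝒜.erase ∅, x B) = 1 ∧
        ∀ i, (∑ B ∈ 𝒜.erase ∅, (if B ⊆ E i then (1 : ℝ) else 0) * x B) = Bel i) ↔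
      (∃ Bel' : Set Ω → ℝ, IsBelief (↑𝒜) Bel' ∧ ∀ i, Bel' (E i) = Bel i) :=
  stmt_7_general E Bel 𝒜 h𝒜
end

section
/- Equivalence of consistency and no-Dutch-book for belief assessments (finite case): for a finite assessment Bel : {E₁,…,E_n} → [0,1], the system Σ_{B∈U_F}(min_{ω∈B} 1_{E_i}(ω)) x_B = Bel(E_i), Σ x_B = 1, x_B ≥ 0 has a solution if and only if for every λ₁,…,λ_n ∈ ℝ, max_{B∈U_F} Σᵢ λᵢ((min_{ω∈B} 1_{E_i}(ω)) − Bel(E_i)) ≥ 0. -/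
open scoped Classical

/-!
Writing `v B := (1_{B ⊆ E i} - Bel i)_i ∈ ℝⁿ`, the linear system says exactly that `0` is a convex
combination of the finitely many vectors `v B`, and the Dutch-book condition says that no linear
functional `λ` is negative on all of them. This is Gordan's alternative: if `0 = ∑ x_B v_B` with
`x` a probability vector then `∑ x_B λ(v_B) = 0`, so `λ(v_B) ≥ 0` for some `B`; otherwise the
image of the standard simplex, which is compact and convex, is strictly separated from `0` by a
functional, which is then negative at every `v B`.
-/

open Finset

section Gordan

variable {ι E : Type*} [Fintype ι] [AddCommGroup E] [Module ℝ E]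

theorem exists_nonneg_apply_of_mem_stdSimplex {v : ι → E} {x : ι → ℝ}
    (hx : x ∈ stdSimplex ℝ ι) (hxv : ∑ i, x i • v i = 0) (f : E →ₗ[ℝ] ℝ) :
    ∃ i, 0 ≤ f (v i) := by
  by_contra! hneg
  obtain ⟨i₀, -, hi₀⟩ : ∃ i ∈ univ, (0 : ι → ℝ) i < x i :=
    exists_lt_of_sum_lt (by simp [hx.2])
  have hsum : ∑ i, x i * f (v i) < 0 :=
    sum_neg' (fun i _ ↦ mul_nonpos_of_nonneg_of_nonpos (hx.1 i) (hneg i).le)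
      ⟨i₀, mem_univ _, mul_neg_of_pos_of_neg hi₀ (hneg i₀)⟩
  have hzero : ∑ i, x i * f (v i) = 0 := by
    simp only [← smul_eq_mul, ← map_smul, ← map_sum, hxv, map_zero]
  exact hsum.ne hzero

variable [TopologicalSpace E] [IsTopologicalAddGroup E] [ContinuousSMul ℝ E]

theorem exists_mem_stdSimplex_of_forall_exists_nonneg [LocallyConvexSpace ℝ E]
    [T1Space E] {v : ι → E} (hv : ∀ f : StrongDual ℝ E, ∃ i, 0 ≤ f (v i)) :
    ∃ x ∈ stdSimplex ℝ ι, ∑ i, x i • v i = 0 := by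
  by_contra! h0
  have hK : Disjoint (Fintype.linearCombination ℝ v '' stdSimplex ℝ ι) {0} := by
    simpa [Fintype.linearCombination_apply] using h0
  obtain ⟨f, u, w, hfK, huw, hw0⟩ := geometric_hahn_banach_compact_closed
    ((convex_stdSimplex ℝ ι).linear_image _)
    ((isCompact_stdSimplex ℝ ι).image (LinearMap.continuous_of_finiteDimensional _))
    (convex_singleton 0) isClosed_singleton hK
  obtain ⟨i, hi⟩ := hv f
  have hfi := hfK (v i) ⟨Pi.single i 1, single_mem_stdSimplex ℝ i, by simp⟩
  have hw := hw0 0 rfl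
  rw [map_zero] at hw
  linarith

theorem exists_mem_stdSimplex_sum_smul_eq_zero_iff [LocallyConvexSpace ℝ E]
    [T1Space E] (v : ι → E) :
    (∃ x ∈ stdSimplex ℝ ι, ∑ i, x i • v i = 0) ↔ ∀ f : StrongDual ℝ E, ∃ i, 0 ≤ f (v i) :=
  ⟨fun ⟨_, hx, hxv⟩ f ↦ exists_nonneg_apply_of_mem_stdSimplex hx hxv f,
    exists_mem_stdSimplex_of_forall_exists_nonneg⟩

end Gordan

theorem Finset.exists_weights_iff_exists_mem_stdSimplex {ι E : Type*} [AddCommMonoid E]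
    [Module ℝ E] (s : Finset ι) (v : ι → E) (y : E) :
    (∃ x : ι → ℝ, (∀ i ∈ s, 0 ≤ x i) ∧ ∑ i ∈ s, x i = 1 ∧ ∑ i ∈ s, x i • v i = y) ↔
      ∃ x ∈ stdSimplex ℝ s, ∑ i : s, x i • v i = y := by
  constructor
  · rintro ⟨x, hx0, hx1, hxv⟩
    refine ⟨fun i ↦ x i, ⟨fun i ↦ hx0 i i.2, ?_⟩, ?_⟩
    · rwa [sum_coe_sort s x]
    · rwa [sum_coe_sort s (fun i ↦ x i • v i)]
  · rintro ⟨x, ⟨hx0, hx1⟩, hxv⟩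
    refine ⟨fun i ↦ if hi : i ∈ s then x ⟨i, hi⟩ else 0, fun i hi ↦ by simp [hi, hx0], ?_, ?_⟩
    · rwa [sum_dite_of_true (fun _ ↦ id)]
    · simp only [dite_smul, zero_smul]
      rwa [sum_dite_of_true (fun _ ↦ id)]

theorem StrongDual.forall_pi_iff {κ : Type*} [Fintype κ] (p : ((κ → ℝ) → ℝ) → Prop) :
    (∀ f : StrongDual ℝ (κ → ℝ), p f) ↔ ∀ lam : κ → ℝ, p fun y ↦ ∑ k, lam k * y k := by
  constructor
  · intro h lam
    convert h (∑ k, lam k • ContinuousLinearMap.proj k) using 1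
    ext y
    simp
  · intro h f
    convert h fun k ↦ f (Pi.single k 1) using 1
    ext y
    conv_lhs => rw [pi_eq_sum_univ' y]
    simp [mul_comm]

theorem Finset.exists_weights_sum_smul_eq_zero_iff_pi {ι κ : Type*} [Fintype κ]
    (s : Finset ι) (v : ι → κ → ℝ) :
    (∃ x : ι → ℝ, (∀ i ∈ s, 0 ≤ x i) ∧ ∑ i ∈ s, x i = 1 ∧ ∑ i ∈ s, x i • v i = 0) ↔
      ∀ lam : κ → ℝ, ∃ i ∈ s, 0 ≤ ∑ k, lam k * v i k := by
  rw [exists_weights_iff_exists_mem_stdSimplex, exists_mem_stdSimplex_sum_smul_eq_zero_iff,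
    StrongDual.forall_pi_iff fun f ↦ ∃ i : s, 0 ≤ f (v i)]
  simp only [Finset.exists_coe, exists_prop]

theorem Finset.sum_smul_sub_eq_zero_iff {ι κ : Type*} (s : Finset ι) {x : ι → ℝ}
    (hx : ∑ i ∈ s, x i = 1) (a : ι → κ → ℝ) (c : κ → ℝ) :
    ∑ i ∈ s, x i • (fun k ↦ a i k - c k) = 0 ↔ ∀ k, ∑ i ∈ s, a i k * x i = c k := by
  simp only [funext_iff, Finset.sum_apply, Pi.smul_apply, smul_eq_mul, Pi.zero_apply]
  refine forall_congr' fun k ↦ ?_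
  have hsplit : ∀ i, x i * (a i k - c k) = a i k * x i - c k * x i := fun i ↦ by ring
  rw [sum_congr rfl fun i _ ↦ hsplit i, sum_sub_distrib, ← mul_sum, hx, mul_one, sub_eq_zero]

theorem stmt_8_general {Ω : Type*} {n : ℕ}
    (E : Fin n → Set Ω) (Bel : Fin n → ℝ)
    (𝒜 : Finset (Set Ω)) :
    (∃ x : Set Ω → ℝ,
        (∀ B ∈ 𝒜.erase ∅, 0 ≤ x B) ∧
        (∑ B ∈ 𝒜.erase ∅, x B) = 1 ∧
        ∀ i, (∑ B ∈ 𝒜.erase ∅, (if B ⊆ E i then (1 : ℝ) else 0) * x B) = Bel i) ↔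
      (∀ lam : Fin n → ℝ, ∃ B ∈ 𝒜.erase ∅,
        0 ≤ ∑ i, lam i * ((if B ⊆ E i then (1 : ℝ) else 0) - Bel i)) := by
  rw [← Finset.exists_weights_sum_smul_eq_zero_iff_pi]
  exact exists_congr fun x ↦ and_congr_right' <| and_congr_right fun hx ↦
    (Finset.sum_smul_sub_eq_zero_iff _ hx _ Bel).symm

theorem stmt_8 {Ω : Type*} [Nonempty Ω] {n : ℕ}
    (E : Fin n → Set Ω) (Bel : Fin n → ℝ) (hBel : ∀ i, Bel i ∈ Set.Icc (0 : ℝ) 1)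
    (𝒜 : Finset (Set Ω)) (h𝒜 : IsGenAlgebraOf 𝒜 (Set.range E)) :
    (∃ x : Set Ω → ℝ,
        (∀ B ∈ 𝒜.erase ∅, 0 ≤ x B) ∧
        (∑ B ∈ 𝒜.erase ∅, x B) = 1 ∧
        ∀ i, (∑ B ∈ 𝒜.erase ∅, (if B ⊆ E i then (1 : ℝ) else 0) * x B) = Bel i) ↔
      (∀ lam : Fin n → ℝ, ∃ B ∈ 𝒜.erase ∅,
        0 ≤ ∑ i, lam i * ((if B ⊆ E i then (1 : ℝ) else 0) - Bel i)) :=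
  stmt_8_general E Bel 𝒜
end

section
/- Coherence implies no uniformly dominating penalty (quadratic scoring): if the assessment d = (Bel(E₁),…,Bel(E_n)) lies in the convex hull of the vectors e^j = (min_{ω∈A_j}1_{E_1}(ω),…,min_{ω∈A_j}1_{E_n}(ω)) for A_j ranging over U_F, then there is no distinct d* ∈ [0,1]ⁿ with ‖e^j − d*‖² < ‖e^j − d‖² for every j. -/
/-!
Since `(z - s)² - (z - d)² = 2 (d - s) z - (d² - s²)` is affine in `z`, the points `z` that are
strictly closer to `s` than to `d` form an open half-space, which is convex. If every `e^j` lay in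
it, so would their convex combination `d`; but `d` is not strictly closer to `s` than to itself.
-/

open scoped Classical

section SumSq

variable {ι : Type*} [Fintype ι]

theorem convex_setOf_sum_sq_sub_lt_sum_sq_sub (s d : ι → ℝ) :
    Convex ℝ {z : ι → ℝ | ∑ i, (z i - s i) ^ 2 < ∑ i, (z i - d i) ^ 2} := by
  have hlin : IsLinearMap ℝ fun z : ι → ℝ => ∑ i, 2 * (d i - s i) * z i :=
    ⟨fun x y => by simp only [Pi.add_apply, mul_add, Finset.sum_add_distrib],
      fun c x => by
        simp only [Pi.smul_apply, smul_eq_mul, Finset.mul_sum]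
        exact Finset.sum_congr rfl fun i _ => by ring⟩
  have hset : {z : ι → ℝ | ∑ i, (z i - s i) ^ 2 < ∑ i, (z i - d i) ^ 2} =
      {z | ∑ i, 2 * (d i - s i) * z i < ∑ i, (d i ^ 2 - s i ^ 2)} := by
    ext z
    simp only [Set.mem_ofPred_eq]
    rw [← sub_neg, ← sub_neg (b := ∑ i, (d i ^ 2 - s i ^ 2)), ← Finset.sum_sub_distrib,
      ← Finset.sum_sub_distrib]
    refine iff_of_eq (congrArg (· < 0) (Finset.sum_congr rfl fun i _ => ?_))
    ring
  exact hset ▸ convex_halfSpace_lt hlin _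

theorem exists_sum_sq_sub_le_of_mem_convexHull {S : Set (ι → ℝ)} {d : ι → ℝ}
    (hd : d ∈ convexHull ℝ S) (s : ι → ℝ) :
    ∃ z ∈ S, ∑ i, (z i - d i) ^ 2 ≤ ∑ i, (z i - s i) ^ 2 := by
  by_contra! hcloser
  have hd_closer : ∑ i, (d i - s i) ^ 2 < ∑ i, (d i - d i) ^ 2 :=
    convexHull_min hcloser (convex_setOf_sum_sq_sub_lt_sum_sq_sub s d) hd
  simp only [sub_self, ne_eq, OfNat.ofNat_ne_zero, not_false_eq_true, zero_pow,
    Finset.sum_const_zero] at hd_closer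
  exact hd_closer.not_ge (Finset.sum_nonneg fun i _ => sq_nonneg _)

end SumSq

theorem stmt_10_general {Ω : Type*} {n : ℕ}
    (𝒜 : Finset (Set Ω))
    (e : Set Ω → (Fin n → ℝ))
    (d : Fin n → ℝ)
    (hd : d ∈ convexHull ℝ (e '' (↑(𝒜.erase ∅) : Set (Set Ω)))) :
    ¬ ∃ dstar : Fin n → ℝ, (∀ i, dstar i ∈ Set.Icc (0 : ℝ) 1) ∧ dstar ≠ d ∧
        ∀ B ∈ 𝒜.erase ∅,
          (∑ i, (e B i - dstar i) ^ 2) < ∑ i, (e B i - d i) ^ 2 := by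
  rintro ⟨dstar, -, -, hdom⟩
  obtain ⟨_, ⟨B, hB, rfl⟩, hle⟩ := exists_sum_sq_sub_le_of_mem_convexHull hd dstar
  exact (hdom B hB).not_ge hle

theorem stmt_10 {Ω : Type*} [Nonempty Ω] {n : ℕ}
    (E : Fin n → Set Ω)
    (𝒜 : Finset (Set Ω)) (h𝒜 : IsGenAlgebraOf 𝒜 (Set.range E))
    (e : Set Ω → (Fin n → ℝ))
    (he : ∀ B, e B = fun i => if B ⊆ E i then (1 : ℝ) else 0)
    (d : Fin n → ℝ)
    (hd : d ∈ convexHull ℝ (e '' (↑(𝒜.erase ∅) : Set (Set Ω)))) :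
    ¬ ∃ dstar : Fin n → ℝ, (∀ i, dstar i ∈ Set.Icc (0 : ℝ) 1) ∧ dstar ≠ d ∧
        ∀ B ∈ 𝒜.erase ∅,
          (∑ i, (e B i - dstar i) ^ 2) < ∑ i, (e B i - d i) ^ 2 :=
  stmt_10_general 𝒜 e d hd
end

section
/- Equivalence of coherence-3 and coherence-5 (finite case): for a finite assessment Bel : {E₁,…,E_n} → [0,1] with d = (Bel(E₁),…,Bel(E_n)) and e^j the vectors of generalized indicators over U_F, the system defining coherence-3 is solvable if and only if there is no distinct assessment d* ∈ [0,1]ⁿ such that Σᵢ((min_{ω∈B}1_{E_i}(ω)) − d*ᵢ)² < Σᵢ((min_{ω∈B}1_{E_i}(ω)) − dᵢ)² for every B ∈ U_F. -/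
/-!
If `d` lies in the convex hull `K` of the points `e B`, no `d* ≠ d` can be strictly closer than `d`
to every `e B`: the points strictly closer to `d*` than to `d` form an open half-space, which would
then contain `K` and hence `d` itself. Conversely, if `d ∉ K`, the nearest point `d*` of `K` to `d`
sees every point of `K` at an angle of at least `π/2` from `d`, so it is strictly closer than `d`
to all of `K`; it lies in `[0,1]ⁿ` because `K` does.
-/

open scoped Classical

section InnerProductSpace

variable {F : Type*} [NormedAddCommGroup F] [InnerProductSpace ℝ F]

theorem convex_setOf_dist_lt_dist (x d : F) : Convex ℝ {y : F | dist y x < dist y d} := by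
  have hset : {y : F | dist y x < dist y d} =
      {y | inner ℝ (d - x) y < (‖d‖ ^ 2 - ‖x‖ ^ 2) / 2} := by
    ext y
    simp only [Set.mem_ofPred_eq, dist_eq_norm, ← sq_lt_sq₀ (norm_nonneg _) (norm_nonneg _),
      norm_sub_sq_real, inner_sub_left, real_inner_comm y]
    constructor <;> intro h <;> linarith
  rw [hset]
  exact convex_halfSpace_lt (innerₛₗ ℝ (d - x)).isLinear _

theorem not_forall_dist_lt_dist_of_mem_convexHull {S : Set F} {d : F}
    (hd : d ∈ convexHull ℝ S) (x : F) : ¬∀ y ∈ S, dist y x < dist y d := fun h => by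
  have hdx : dist d x < dist d d := convexHull_min h (convex_setOf_dist_lt_dist x d) hd
  exact (dist_self d ▸ hdx).not_ge dist_nonneg

theorem exists_forall_dist_lt_dist_of_notMem {K : Set F} (hne : K.Nonempty)
    (hcomplete : IsComplete K) (hconv : Convex ℝ K) {d : F} (hd : d ∉ K) :
    ∃ v ∈ K, ∀ y ∈ K, dist y v < dist y d := by
  obtain ⟨v, hvK, hv⟩ := exists_norm_eq_iInf_of_complete_convex hne hcomplete hconv d
  rw [norm_eq_iInf_iff_real_inner_le_zero hconv hvK] at hv
  refine ⟨v, hvK, fun y hy => ?_⟩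
  have hobtuse : 0 ≤ inner ℝ (y - v) (v - d) := by
    have := hv y hy
    rw [← neg_sub v d, inner_neg_left, real_inner_comm] at this
    linarith
  have hvd : 0 < ‖v - d‖ := norm_pos_iff.mpr (sub_ne_zero.mpr (ne_of_mem_of_not_mem hvK hd))
  rw [dist_eq_norm, dist_eq_norm, ← sq_lt_sq₀ (norm_nonneg _) (norm_nonneg _),
    ← sub_add_sub_cancel y v d, norm_add_sq_real]
  nlinarith

theorem mem_convexHull_iff_not_exists_forall_dist_lt_dist {S C : Set F} (hS : S.Finite)
    (hne : S.Nonempty) (hC : Convex ℝ C) (hSC : S ⊆ C) (d : F) :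
    d ∈ convexHull ℝ S ↔ ¬∃ x ∈ C, x ≠ d ∧ ∀ y ∈ S, dist y x < dist y d := by
  refine ⟨fun hd ⟨x, _, _, hx⟩ => not_forall_dist_lt_dist_of_mem_convexHull hd x hx,
    fun h => by_contra fun hd => h ?_⟩
  obtain ⟨v, hv, hvd⟩ := exists_forall_dist_lt_dist_of_notMem
    (hne.mono (subset_convexHull ℝ S)) (hS.isCompact_convexHull ℝ).isComplete
    (convex_convexHull ℝ S) hd
  exact ⟨v, convexHull_min hSC hC hv, ne_of_mem_of_not_mem hv hd,
    fun y hy => hvd y (subset_convexHull ℝ S hy)⟩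

end InnerProductSpace

theorem EuclideanSpace.sum_sq_sub_eq_dist_sq {ι : Type*} [Fintype ι] (x y : ι → ℝ) :
    ∑ i, (x i - y i) ^ 2 = dist (WithLp.toLp 2 x) (WithLp.toLp 2 y) ^ 2 := by
  simp [EuclideanSpace.dist_sq_eq, Real.dist_eq, sq_abs]

theorem mem_convexHull_iff_not_exists_forall_sum_sq_lt {ι : Type*} [Fintype ι]
    {S C : Set (ι → ℝ)} (hS : S.Finite) (hne : S.Nonempty) (hC : Convex ℝ C) (hSC : S ⊆ C)
    (d : ι → ℝ) :
    d ∈ convexHull ℝ S ↔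
      ¬∃ x ∈ C, x ≠ d ∧ ∀ y ∈ S, ∑ i, (y i - x i) ^ 2 < ∑ i, (y i - d i) ^ 2 := by
  let L := (WithLp.linearEquiv 2 ℝ (ι → ℝ)).symm
  have hL : ∀ x, L x = WithLp.toLp 2 x := fun _ => rfl
  have hdist := mem_convexHull_iff_not_exists_forall_dist_lt_dist (hS.image L) (hne.image L)
    (hC.linear_image L.toLinearMap) (Set.image_mono hSC) (L d)
  have hhull := L.toLinearMap.image_convexHull S
  rw [LinearEquiv.coe_coe] at hhull
  rw [← hhull, L.injective.mem_set_image] at hdist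
  simpa only [LinearEquiv.coe_coe, Set.exists_mem_image, Set.forall_mem_image, hL,
    (WithLp.toLp_injective 2).ne_iff, EuclideanSpace.sum_sq_sub_eq_dist_sq,
    sq_lt_sq₀ dist_nonneg dist_nonneg] using hdist

theorem stmt_13_general {Ω : Type*} [Nonempty Ω] {n : ℕ}
    (E : Fin n → Set Ω)
    (𝒜 : Finset (Set Ω)) (h𝒜 : IsGenAlgebraOf 𝒜 (Set.range E))
    (e : Set Ω → (Fin n → ℝ))
    (he : ∀ B, e B = fun i => if B ⊆ E i then (1 : ℝ) else 0)
    (d : Fin n → ℝ) :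
    d ∈ convexHull ℝ (e '' (↑(𝒜.erase ∅) : Set (Set Ω))) ↔
      ¬ ∃ dstar : Fin n → ℝ, (∀ i, dstar i ∈ Set.Icc (0 : ℝ) 1) ∧ dstar ≠ d ∧
          ∀ B ∈ 𝒜.erase ∅,
            (∑ i, (e B i - dstar i) ^ 2) < ∑ i, (e B i - d i) ^ 2 := by
  have hne : (e '' (↑(𝒜.erase ∅) : Set (Set Ω))).Nonempty :=
    ⟨e Set.univ, Set.mem_image_of_mem e
      (Finset.mem_erase.mpr ⟨Set.univ_nonempty.ne_empty, h𝒜.1.2.1⟩)⟩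
  have hbox : e '' (↑(𝒜.erase ∅) : Set (Set Ω)) ⊆ Set.univ.pi fun _ => Set.Icc 0 1 := by
    rintro _ ⟨B, -, rfl⟩ i -
    rw [he B]
    by_cases hB : B ⊆ E i <;> simp [hB]
  rw [mem_convexHull_iff_not_exists_forall_sum_sq_lt ((𝒜.erase ∅).finite_toSet.image e) hne
    (convex_pi fun _ _ => convex_Icc 0 1) hbox]
  simp only [Set.mem_univ_pi, Set.forall_mem_image, Finset.mem_coe]

theorem stmt_13 {Ω : Type*} [Nonempty Ω] {n : ℕ}
    (E : Fin n → Set Ω) (Bel : Fin n → ℝ) (hBel : ∀ i, Bel i ∈ Set.Icc (0 : ℝ) 1)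
    (𝒜 : Finset (Set Ω)) (h𝒜 : IsGenAlgebraOf 𝒜 (Set.range E))
    (e : Set Ω → (Fin n → ℝ))
    (he : ∀ B, e B = fun i => if B ⊆ E i then (1 : ℝ) else 0)
    (d : Fin n → ℝ) (hd : d = fun i => Bel i) :
    d ∈ convexHull ℝ (e '' (↑(𝒜.erase ∅) : Set (Set Ω))) ↔
      ¬ ∃ dstar : Fin n → ℝ, (∀ i, dstar i ∈ Set.Icc (0 : ℝ) 1) ∧ dstar ≠ d ∧
          ∀ B ∈ 𝒜.erase ∅,
            (∑ i, (e B i - dstar i) ^ 2) < ∑ i, (e B i - d i) ^ 2 :=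
  stmt_13_general E 𝒜 h𝒜 e he d
end

section
/- If coherence conditions hold for the whole finite family, they hold for all subfamilies: if the linear system S_E (for E = {E₁,…,E_n}) defining coherence-3 is solvable, then for every non-empty subset F ⊆ E the system S_F is solvable. -/
open scoped Classical

/-!
A solution `x` of `S_E` is a mass function on the nonempty members of `𝒜E`. Push it forward
along the map sending `B` to the least member `φ B` of the algebra generated by `F` containing
`B`. Since every `E i` with `i ∈ F` lies in that algebra, `B ⊆ E i` iff `φ B ⊆ E i`, so the
pushed-forward masses satisfy the equations of `S_F`; nonnegativity and total mass are preserved,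
and `φ B ≠ ∅` because `B ⊆ φ B`.
-/

open Finset

lemma Finset.sum_mul_sum_fiberwise {ι κ R : Type*} [NonUnitalNonAssocSemiring R]
    {s : Finset ι} {t : Finset κ} {g : ι → κ} (h : ∀ i ∈ s, g i ∈ t) (f : κ → R) (x : ι → R) :
    ∑ j ∈ t, f j * ∑ i ∈ s with g i = j, x i = ∑ i ∈ s, f (g i) * x i := by
  simp_rw [mul_sum]
  rw [← sum_fiberwise_of_maps_to h]
  refine sum_congr rfl fun j _ ↦ sum_congr rfl fun i hi ↦ ?_
  rw [(mem_filter.1 hi).2]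

section LeastSuperset

variable {Ω : Type*}

lemma IsSetAlgebra.sInter_mem {𝒜 : Set (Set Ω)} (h : IsSetAlgebra 𝒜) {T : Finset (Set Ω)}
    (hT : ↑T ⊆ 𝒜) : ⋂₀ ↑T ∈ 𝒜 := by
  induction T using Finset.induction_on with
  | empty => simpa using h.2.1
  | insert A T _ ih =>
    rw [coe_insert, Set.insert_subset_iff] at hT
    rw [coe_insert, Set.sInter_insert]
    exact h.2.2.2.1 A hT.1 _ (ih hT.2)

def leastSuperset (𝒜 : Finset (Set Ω)) (B : Set Ω) : Set Ω :=
  ⋂₀ ↑(𝒜.filter (B ⊆ ·))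

variable {𝒜 : Finset (Set Ω)} {B C : Set Ω}

lemma leastSuperset_mem (h : IsSetAlgebra (↑𝒜 : Set (Set Ω))) (B : Set Ω) :
    leastSuperset 𝒜 B ∈ 𝒜 :=
  h.sInter_mem (coe_subset.2 (filter_subset (B ⊆ ·) 𝒜))

lemma subset_leastSuperset (𝒜 : Finset (Set Ω)) (B : Set Ω) : B ⊆ leastSuperset 𝒜 B :=
  Set.subset_sInter fun _ hC ↦ (mem_filter.1 (mem_coe.1 hC)).2

lemma leastSuperset_subset_iff (hC : C ∈ 𝒜) : leastSuperset 𝒜 B ⊆ C ↔ B ⊆ C :=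
  ⟨(subset_leastSuperset 𝒜 B).trans,
    fun hBC ↦ Set.sInter_subset_of_mem (mem_coe.2 (mem_filter.2 ⟨hC, hBC⟩))⟩

lemma leastSuperset_ne_empty (hB : B ≠ ∅) : leastSuperset 𝒜 B ≠ ∅ :=
  fun h ↦ hB (Set.subset_eq_empty (subset_leastSuperset 𝒜 B) h)

end LeastSuperset

theorem stmt_14_general {Ω : Type*} {n : ℕ}
    (E : Fin n → Set Ω) (Bel : Fin n → ℝ)
    (𝒜E : Finset (Set Ω))
    (hsolv : ∃ x : Set Ω → ℝ,
      (∀ B ∈ 𝒜E.erase ∅, 0 ≤ x B) ∧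
      (∑ B ∈ 𝒜E.erase ∅, x B) = 1 ∧
      ∀ i, (∑ B ∈ 𝒜E.erase ∅, (if B ⊆ E i then (1 : ℝ) else 0) * x B) = Bel i) :
    ∀ S : Finset (Fin n), S.Nonempty →
      ∀ 𝒜F : Finset (Set Ω), IsGenAlgebraOf 𝒜F (E '' ↑S) →
        ∃ x : Set Ω → ℝ,
          (∀ B ∈ 𝒜F.erase ∅, 0 ≤ x B) ∧
          (∑ B ∈ 𝒜F.erase ∅, x B) = 1 ∧
          ∀ i ∈ S, (∑ B ∈ 𝒜F.erase ∅, (if B ⊆ E i then (1 : ℝ) else 0) * x B) = Bel i := by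
  obtain ⟨x, hx_nonneg, hx_sum, hx_bel⟩ := hsolv
  intro S _ 𝒜F h𝒜F
  have hmaps : ∀ B ∈ 𝒜E.erase ∅, leastSuperset 𝒜F B ∈ 𝒜F.erase ∅ := fun B hB ↦
    mem_erase.2 ⟨leastSuperset_ne_empty (mem_erase.1 hB).1, leastSuperset_mem h𝒜F.1 B⟩
  refine ⟨fun C ↦ ∑ B ∈ 𝒜E.erase ∅ with leastSuperset 𝒜F B = C, x B,
    fun C _ ↦ sum_nonneg fun B hB ↦ hx_nonneg B (mem_filter.1 hB).1,
    by rw [sum_fiberwise_of_maps_to hmaps, hx_sum], fun i hi ↦ ?_⟩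
  have hEi : E i ∈ 𝒜F := h𝒜F.2.1 ⟨i, hi, rfl⟩
  calc _ = ∑ B ∈ 𝒜E.erase ∅, (if leastSuperset 𝒜F B ⊆ E i then (1 : ℝ) else 0) * x B :=
        sum_mul_sum_fiberwise hmaps _ x
    _ = Bel i := by simp_rw [leastSuperset_subset_iff hEi]; exact hx_bel i

theorem stmt_14 {Ω : Type*} [Nonempty Ω] {n : ℕ}
    (E : Fin n → Set Ω) (Bel : Fin n → ℝ)
    (𝒜E : Finset (Set Ω)) (h𝒜E : IsGenAlgebraOf 𝒜E (Set.range E))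
    (hsolv : ∃ x : Set Ω → ℝ,
      (∀ B ∈ 𝒜E.erase ∅, 0 ≤ x B) ∧
      (∑ B ∈ 𝒜E.erase ∅, x B) = 1 ∧
      ∀ i, (∑ B ∈ 𝒜E.erase ∅, (if B ⊆ E i then (1 : ℝ) else 0) * x B) = Bel i) :
    ∀ S : Finset (Fin n), S.Nonempty →
      ∀ 𝒜F : Finset (Set Ω), IsGenAlgebraOf 𝒜F (E '' ↑S) →
        ∃ x : Set Ω → ℝ,
          (∀ B ∈ 𝒜F.erase ∅, 0 ≤ x B) ∧
          (∑ B ∈ 𝒜F.erase ∅, x B) = 1 ∧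
          ∀ i ∈ S, (∑ B ∈ 𝒜F.erase ∅, (if B ⊆ E i then (1 : ℝ) else 0) * x B) = Bel i :=
  stmt_14_general E Bel 𝒜E hsolv
end

section
/- Coherent extension via compactness: if Bel : E → [0,1] is an assessment on an arbitrary non-empty family E of subsets of Ω such that for every finite F ⊆ E there is a belief function on algebra(F) extending Bel|_F, then there exists a belief function Bel' on algebra(E) extending Bel. -/
open scoped Classical

/-- The algebra of subsets of `Ω` generated by the family `𝒢`. -/
def algGen {Ω : Type*} (𝒢 : Set (Set Ω)) : Set (Set Ω) :=
  ⋂₀ {ℬ | IsSetAlgebra ℬ ∧ 𝒢 ⊆ ℬ}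

/-!
For each finite `F ⊆ ℰ`, the `[0, 1]`-valued belief functions on the algebra generated by `F`
that extend `Bel` on `F` form a nonempty closed subset of the compact cube `[0, 1] ^ Set Ω`
(an extension is made `[0, 1]`-valued by setting it to `0` off the algebra). These sets shrink as
`F` grows, so by compactness they share a point `B`. Every condition defining a belief function on
the algebra generated by `ℰ` involves only finitely many sets, all lying in the algebra generated
by some finite `F ⊆ ℰ`, so `B` is such a belief function.
-/

theorem isSetAlgebra_iff {Ω : Type*} (𝒜 : Set (Set Ω)) :
    IsSetAlgebra 𝒜 ↔ MeasureTheory.IsSetAlgebra 𝒜 := by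
  refine ⟨fun ⟨h0, _, hc, _, hu⟩ => ⟨h0, fun A hA => hc A hA, fun A B hA hB => hu A hA B hB⟩,
    fun h => ⟨h.empty_mem, h.univ_mem, fun A hA => h.compl_mem hA,
      fun A hA B hB => h.inter_mem hA hB, fun A hA B hB => h.union_mem hA hB⟩⟩

theorem algGen_eq_generateSetAlgebra {Ω : Type*} (𝒢 : Set (Set Ω)) :
    algGen 𝒢 = MeasureTheory.generateSetAlgebra 𝒢 := by
  refine (Set.sInter_subset_of_mem ?_).antisymm (Set.subset_sInter fun ℬ ⟨hℬ, h𝒢ℬ⟩ =>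
    ((isSetAlgebra_iff ℬ).1 hℬ).generateSetAlgebra_subset h𝒢ℬ)
  exact ⟨(isSetAlgebra_iff _).2 MeasureTheory.isSetAlgebra_generateSetAlgebra,
    MeasureTheory.self_subset_generateSetAlgebra⟩

open MeasureTheory

theorem exists_finset_mem_generateSetAlgebra {Ω : Type*} {ℰ : Set (Set Ω)} {A : Set Ω}
    (hA : A ∈ generateSetAlgebra ℰ) :
    ∃ F : Finset (Set Ω), ↑F ⊆ ℰ ∧ A ∈ generateSetAlgebra (↑F : Set (Set Ω)) := by
  induction hA with
  | base E hE => exact ⟨{E}, by simpa using hE, self_subset_generateSetAlgebra (by simp)⟩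
  | empty => exact ⟨∅, by simp, isSetAlgebra_generateSetAlgebra.empty_mem⟩
  | compl A _ ih =>
    obtain ⟨F, hFℰ, hA⟩ := ih
    exact ⟨F, hFℰ, isSetAlgebra_generateSetAlgebra.compl_mem hA⟩
  | union A B _ _ ihA ihB =>
    obtain ⟨F, hFℰ, hA⟩ := ihA
    obtain ⟨G, hGℰ, hB⟩ := ihB
    refine ⟨F ∪ G, by simpa using ⟨hFℰ, hGℰ⟩, isSetAlgebra_generateSetAlgebra.union_mem ?_ ?_⟩
    · exact generateSetAlgebra_mono (by simp) hA
    · exact generateSetAlgebra_mono (by simp) hB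

theorem exists_finset_forall_mem_generateSetAlgebra {Ω ι : Type*} [Finite ι]
    {ℰ : Set (Set Ω)} {A : ι → Set Ω} (hA : ∀ i, A i ∈ generateSetAlgebra ℰ) :
    ∃ F : Finset (Set Ω), ↑F ⊆ ℰ ∧ ∀ i, A i ∈ generateSetAlgebra (↑F : Set (Set Ω)) := by
  have := Fintype.ofFinite ι
  choose F hFℰ hAF using fun i => exists_finset_mem_generateSetAlgebra (hA i)
  refine ⟨Finset.univ.biUnion F, by simpa using hFℰ, fun i => ?_⟩
  exact generateSetAlgebra_mono
    (Finset.coe_subset.2 (Finset.subset_biUnion_of_mem F (Finset.mem_univ i))) (hAF i)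

section Belief

variable {Ω : Type*} {𝒜 : Set (Set Ω)} {B : Set Ω → ℝ}

theorem IsBelief.mono {ℬ : Set (Set Ω)} (hB : IsBelief ℬ B) (h𝒜ℬ : 𝒜 ⊆ ℬ) : IsBelief 𝒜 B :=
  ⟨fun A hA => hB.1 A (h𝒜ℬ hA), hB.2.1, hB.2.2.1,
    fun k hk A hA => hB.2.2.2 k hk A fun i => h𝒜ℬ (hA i)⟩

theorem IsBelief.congr (h𝒜 : MeasureTheory.IsSetAlgebra 𝒜) (hB : IsBelief 𝒜 B)
    {B' : Set Ω → ℝ} (hBB' : Set.EqOn B B' 𝒜) : IsBelief 𝒜 B' := by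
  obtain ⟨hIcc, h0, h1, hcm⟩ := hB
  refine ⟨fun A hA => hBB' hA ▸ hIcc A hA, hBB' h𝒜.empty_mem ▸ h0, hBB' h𝒜.univ_mem ▸ h1,
    fun k hk A hA => ?_⟩
  have hUnion : (⋃ i, A i) ∈ 𝒜 := by
    simpa using h𝒜.biUnion_mem Finset.univ fun i _ => hA i
  rw [← hBB' hUnion]
  refine le_of_eq_of_le (Finset.sum_congr rfl fun I _ => ?_) (hcm k hk A hA)
  rw [← hBB' (h𝒜.biInter_mem I fun i _ => hA i)]

theorem IsBelief.indicator (h𝒜 : MeasureTheory.IsSetAlgebra 𝒜) (hB : IsBelief 𝒜 B) :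
    IsBelief 𝒜 (𝒜.indicator B) :=
  hB.congr h𝒜 fun _ hA => (Set.indicator_of_mem hA B).symm

theorem IsBelief.indicator_mem_pi (hB : IsBelief 𝒜 B) :
    𝒜.indicator B ∈ Set.univ.pi fun _ => Set.Icc (0 : ℝ) 1 := by
  intro A _
  by_cases hA : A ∈ 𝒜
  · simpa [hA] using hB.1 A hA
  · simp [hA]

theorem isClosed_setOf_isBelief (𝒜 : Set (Set Ω)) :
    IsClosed {B : Set Ω → ℝ | IsBelief 𝒜 B} := by
  simp only [IsBelief, CompletelyMonotone, Set.ofPred_and, Set.ofPred_forall]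
  refine .inter (isClosed_biInter fun A _ => isClosed_Icc.preimage (continuous_apply A))
    (.inter (isClosed_eq (continuous_apply _) continuous_const)
      (.inter (isClosed_eq (continuous_apply _) continuous_const)
        (isClosed_iInter fun k => isClosed_iInter fun _ => isClosed_iInter fun A =>
          isClosed_iInter fun _ => isClosed_le ?_ (continuous_apply _))))
  fun_prop

theorem isBelief_generateSetAlgebra_of_forall_finset {ℰ : Set (Set Ω)}
    (h : ∀ F : Finset (Set Ω), ↑F ⊆ ℰ → IsBelief (generateSetAlgebra (↑F : Set (Set Ω))) B) :
    IsBelief (generateSetAlgebra ℰ) B := by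
  refine ⟨fun A hA => ?_, (h ∅ (by simp)).2.1, (h ∅ (by simp)).2.2.1, fun k hk A hA => ?_⟩
  · obtain ⟨F, hFℰ, hAF⟩ := exists_finset_mem_generateSetAlgebra hA
    exact (h F hFℰ).1 A hAF
  · obtain ⟨F, hFℰ, hAF⟩ := exists_finset_forall_mem_generateSetAlgebra hA
    exact (h F hFℰ).2.2.2 k hk A hAF

def beliefExtensions (Bel : Set Ω → ℝ) (F : Finset (Set Ω)) : Set (Set Ω → ℝ) :=
  (Set.univ.pi fun _ => Set.Icc 0 1) ∩ {B | IsBelief (generateSetAlgebra (↑F : Set (Set Ω))) B} ∩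
    {B | ∀ E ∈ F, B E = Bel E}

theorem isCompact_beliefExtensions (Bel : Set Ω → ℝ) (F : Finset (Set Ω)) :
    IsCompact (beliefExtensions Bel F) := by
  have hcube := isCompact_univ_pi fun (_ : Set Ω) => isCompact_Icc (a := (0 : ℝ)) (b := 1)
  refine hcube.of_isClosed_subset ?_ fun _ hB => hB.1.1
  refine (hcube.isClosed.inter (isClosed_setOf_isBelief _)).inter ?_
  simp only [Set.ofPred_forall]
  exact isClosed_biInter fun E _ => isClosed_eq (continuous_apply E) continuous_const

theorem beliefExtensions_anti (Bel : Set Ω → ℝ) {F G : Finset (Set Ω)} (hFG : F ⊆ G) :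
    beliefExtensions Bel G ⊆ beliefExtensions Bel F := fun _ ⟨⟨hBcube, hB⟩, hBel⟩ =>
  ⟨⟨hBcube, hB.mono (generateSetAlgebra_mono (Finset.coe_subset.2 hFG))⟩,
    fun E hE => hBel E (hFG hE)⟩

theorem beliefExtensions_nonempty {Bel : Set Ω → ℝ} {F : Finset (Set Ω)}
    (h : ∃ B : Set Ω → ℝ, IsBelief (generateSetAlgebra (↑F : Set (Set Ω))) B ∧
      ∀ E ∈ F, B E = Bel E) :
    (beliefExtensions Bel F).Nonempty := by
  obtain ⟨B, hB, hBel⟩ := h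
  refine ⟨_, ⟨hB.indicator_mem_pi, hB.indicator isSetAlgebra_generateSetAlgebra⟩, fun E hE => ?_⟩
  rw [Set.indicator_of_mem (self_subset_generateSetAlgebra hE), hBel E hE]

end Belief

theorem stmt_15_general {Ω : Type*} (ℰ : Set (Set Ω))
    (Bel : Set Ω → ℝ)
    (h : ∀ F : Finset (Set Ω), ↑F ⊆ ℰ →
      ∃ Bel' : Set Ω → ℝ, IsBelief (algGen (↑F : Set (Set Ω))) Bel' ∧
        ∀ E ∈ F, Bel' E = Bel E) :
    ∃ Bel' : Set Ω → ℝ, IsBelief (algGen ℰ) Bel' ∧ ∀ E ∈ ℰ, Bel' E = Bel E := by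
  simp only [algGen_eq_generateSetAlgebra] at h ⊢
  let T (F : {F : Finset (Set Ω) // ↑F ⊆ ℰ}) := beliefExtensions Bel F.1
  have hT_directed : Directed (· ⊇ ·) T := fun F G =>
    ⟨⟨F.1 ∪ G.1, by simpa using ⟨F.2, G.2⟩⟩, beliefExtensions_anti Bel Finset.subset_union_left,
      beliefExtensions_anti Bel Finset.subset_union_right⟩
  have : Nonempty {F : Finset (Set Ω) // ↑F ⊆ ℰ} := ⟨⟨∅, by simp⟩⟩
  obtain ⟨B, hB⟩ := IsCompact.nonempty_iInter_of_directed_nonempty_isCompact_isClosed T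
    hT_directed (fun F => beliefExtensions_nonempty (h F.1 F.2))
    (fun F => isCompact_beliefExtensions Bel F.1)
    (fun F => (isCompact_beliefExtensions Bel F.1).isClosed)
  simp only [Set.mem_iInter] at hB
  refine ⟨B, isBelief_generateSetAlgebra_of_forall_finset fun F hF => (hB ⟨F, hF⟩).1.2,
    fun E hE => (hB ⟨{E}, by simpa using hE⟩).2 E (Finset.mem_singleton_self E)⟩

theorem stmt_15 {Ω : Type*} [Nonempty Ω] (ℰ : Set (Set Ω)) (hne : ℰ.Nonempty)
    (Bel : Set Ω → ℝ) (hBel : ∀ E ∈ ℰ, Bel E ∈ Set.Icc (0 : ℝ) 1)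
    (h : ∀ F : Finset (Set Ω), ↑F ⊆ ℰ →
      ∃ Bel' : Set Ω → ℝ, IsBelief (algGen (↑F : Set (Set Ω))) Bel' ∧
        ∀ E ∈ F, Bel' E = Bel E) :
    ∃ Bel' : Set Ω → ℝ, IsBelief (algGen ℰ) Bel' ∧ ∀ E ∈ ℰ, Bel' E = Bel E :=
  stmt_15_general ℰ Bel h
end
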